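/- arXiv:2407.18886 — 3 statements merged into one kernel-verified Lean document; each statement's English description precedes it below -/
import Mathlib

section
/- For any vector field u : ℝ² → ℝ² that is smooth with compact support, ‖u‖_{L⁴(ℝ²)} ≤ 2^{1/4} · ‖u‖_{L²(ℝ²)}^{1/2} · ‖∇u‖_{L²(ℝ²)}^{1/2}. -/
open MeasureTheory Real ENNReal

theorem line_ftc {φ φ' : ℝ → ℝ} (hd : ∀ t, HasDerivAt φ (φ' t) t)
    (hc : Continuous φ') (hs : HasCompactSupport φ) (x : ℝ) :
    ENNReal.ofReal (φ x) ≤ ∫⁻ t, ENNReal.ofReal |φ' t| := by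
  obtain ⟨R0, hR0⟩ := hs.isBounded.subset_closedBall 0
  set R : ℝ := max R0 0 with hRdef
  have hR : tsupport φ ⊆ Metric.closedBall 0 R :=
    hR0.trans (Metric.closedBall_subset_closedBall (le_max_left _ _))
  have hRnn : 0 ≤ R := le_max_right _ _
  set a : ℝ := -(R + |x| + 1) with ha
  have hax : a ≤ x := by
    have h1 := neg_abs_le x
    simp only [ha]
    nlinarith [abs_nonneg x]
  have hφa : φ a = 0 := by
    apply image_eq_zero_of_notMem_tsupport
    intro hmem
    have := hR hmem
    simp only [Metric.mem_closedBall, dist_zero_right, Real.norm_eq_abs, ha] at this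
    have : |(-(R + |x| + 1))| ≤ R := this
    rw [abs_neg, abs_of_nonneg (by nlinarith [abs_nonneg x])] at this
    nlinarith [abs_nonneg x, hRnn]
  have hint : IntervalIntegrable φ' volume a x := (hc.intervalIntegrable a x)
  have heq : φ x = ∫ t in a..x, φ' t := by
    rw [intervalIntegral.integral_eq_sub_of_hasDerivAt (fun t _ => hd t) hint, hφa, sub_zero]
  have h1 : φ x ≤ ∫ t in Set.Ioc a x, |φ' t| := by
    rw [heq, intervalIntegral.integral_of_le hax]
    exact integral_mono (hc.integrableOn_Ioc) (hc.abs.integrableOn_Ioc)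
      (fun t => le_abs_self _)
  calc ENNReal.ofReal (φ x) ≤ ENNReal.ofReal (∫ t in Set.Ioc a x, |φ' t|) :=
        ENNReal.ofReal_le_ofReal h1
    _ = ∫⁻ t in Set.Ioc a x, ENNReal.ofReal |φ' t| := by
        rw [ofReal_integral_eq_lintegral_ofReal (hc.abs.integrableOn_Ioc)
          (Filter.Eventually.of_forall fun t => abs_nonneg _)]
    _ ≤ ∫⁻ t, ENNReal.ofReal |φ' t| := setLIntegral_le_lintegral _ _

theorem slice_supp {w : ℝ × ℝ → ℝ} (hs : HasCompactSupport w) (y : ℝ) :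
    HasCompactSupport (fun t => w (t, y)) := by
  obtain ⟨R, hR⟩ := hs.isBounded.subset_closedBall 0
  apply HasCompactSupport.intro (isCompact_Icc (a := -R) (b := R))
  intro t ht
  apply image_eq_zero_of_notMem_tsupport
  intro hmem
  have := hR hmem
  simp only [Metric.mem_closedBall, dist_zero_right, Prod.norm_def, Real.norm_eq_abs] at this
  have h1 : |t| ≤ R := le_trans (le_max_left _ _) this
  rw [Set.mem_Icc] at ht
  rcases abs_le.1 h1 with ⟨h2, h3⟩
  exact ht ⟨h2, h3⟩

theorem slice_supp2 {w : ℝ × ℝ → ℝ} (hs : HasCompactSupport w) (x : ℝ) :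
    HasCompactSupport (fun s => w (x, s)) := by
  obtain ⟨R, hR⟩ := hs.isBounded.subset_closedBall 0
  apply HasCompactSupport.intro (isCompact_Icc (a := -R) (b := R))
  intro s ht
  apply image_eq_zero_of_notMem_tsupport
  intro hmem
  have := hR hmem
  simp only [Metric.mem_closedBall, dist_zero_right, Prod.norm_def, Real.norm_eq_abs] at this
  have h1 : |s| ≤ R := le_trans (le_max_right _ _) this
  rw [Set.mem_Icc] at ht
  rcases abs_le.1 h1 with ⟨h2, h3⟩
  exact ht ⟨h2, h3⟩

theorem key2d {w : ℝ × ℝ → ℝ} (hw : ContDiff ℝ (⊤ : ℕ∞) w) (hs : HasCompactSupport w)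
    (hnn : ∀ p, 0 ≤ w p) :
    ∫⁻ p, ENNReal.ofReal (w p ^ 2) ≤
      (∫⁻ p, ENNReal.ofReal |fderiv ℝ w p (1, 0)|) *
        (∫⁻ p, ENNReal.ofReal |fderiv ℝ w p (0, 1)|) := by
  have hwd : Differentiable ℝ w := hw.differentiable (by simp)
  have hfc : Continuous (fderiv ℝ w) := hw.continuous_fderiv (by simp)
  have hk1c : Continuous fun p => fderiv ℝ w p ((1:ℝ), (0:ℝ)) :=
    ((ContinuousLinearMap.apply ℝ ℝ ((1:ℝ), (0:ℝ))).continuous).comp hfc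
  have hk2c : Continuous fun p => fderiv ℝ w p ((0:ℝ), (1:ℝ)) :=
    ((ContinuousLinearMap.apply ℝ ℝ ((0:ℝ), (1:ℝ))).continuous).comp hfc
  set k₁ : ℝ × ℝ → ℝ≥0∞ := fun p => ENNReal.ofReal |fderiv ℝ w p (1, 0)| with hk₁
  set k₂ : ℝ × ℝ → ℝ≥0∞ := fun p => ENNReal.ofReal |fderiv ℝ w p (0, 1)| with hk₂
  have hk₁m : Measurable k₁ := by
    exact ENNReal.measurable_ofReal.comp (hk1c.abs.measurable)
  have hk₂m : Measurable k₂ := by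
    exact ENNReal.measurable_ofReal.comp (hk2c.abs.measurable)
  set F : ℝ → ℝ≥0∞ := fun y => ∫⁻ t, k₁ (t, y) with hF
  set G : ℝ → ℝ≥0∞ := fun x => ∫⁻ s, k₂ (x, s) with hG
  -- pointwise bound
  have hpt : ∀ p : ℝ × ℝ, ENNReal.ofReal (w p ^ 2) ≤ G p.1 * F p.2 := by
    intro p
    have h1 : ENNReal.ofReal (w p) ≤ F p.2 := by
      have hd : ∀ t, HasDerivAt (fun t => w (t, p.2)) (fderiv ℝ w (t, p.2) (1, 0)) t := by
        intro t
        exact (hwd (t, p.2)).hasFDerivAt.comp_hasDerivAt t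
          ((hasDerivAt_id t).prodMk (hasDerivAt_const t p.2))
      have := line_ftc hd (hk1c.comp (continuous_id.prodMk continuous_const)) 
        (slice_supp hs p.2) p.1
      exact this
    have h2 : ENNReal.ofReal (w p) ≤ G p.1 := by
      have hd : ∀ s, HasDerivAt (fun s => w (p.1, s)) (fderiv ℝ w (p.1, s) (0, 1)) s := by
        intro s
        exact (hwd (p.1, s)).hasFDerivAt.comp_hasDerivAt s
          ((hasDerivAt_const s p.1).prodMk (hasDerivAt_id s))
      have := line_ftc hd (hk2c.comp (continuous_const.prodMk continuous_id))
        (slice_supp2 hs p.1) p.2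
      exact this
    calc ENNReal.ofReal (w p ^ 2) = ENNReal.ofReal (w p) * ENNReal.ofReal (w p) := by
          rw [← ENNReal.ofReal_mul (hnn p), sq]
      _ ≤ G p.1 * F p.2 := mul_le_mul' h2 h1
  calc ∫⁻ p, ENNReal.ofReal (w p ^ 2) ≤ ∫⁻ p, G p.1 * F p.2 := lintegral_mono hpt
    _ = (∫⁻ x, G x) * (∫⁻ y, F y) := by
        rw [Measure.volume_eq_prod ℝ ℝ]
        exact lintegral_prod_mul hk₂m.lintegral_prod_right'.aemeasurable
          hk₁m.lintegral_prod_left'.aemeasurable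
    _ = (∫⁻ p, k₂ p) * (∫⁻ p, k₁ p) := by
        congr 1
        · rw [Measure.volume_eq_prod ℝ ℝ, lintegral_prod _ hk₂m.aemeasurable]
        · rw [Measure.volume_eq_prod ℝ ℝ, lintegral_prod_symm _ hk₁m.aemeasurable]
    _ = (∫⁻ p, k₁ p) * (∫⁻ p, k₂ p) := mul_comm _ _

open RealInnerProductSpace

noncomputable def sigLL : (ℝ × ℝ) ≃L[ℝ] EuclideanSpace ℝ (Fin 2) :=
  (ContinuousLinearEquiv.finTwoArrow ℝ ℝ).symm.trans (EuclideanSpace.equiv (Fin 2) ℝ).symm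

theorem sigLL_mp : MeasurePreserving (⇑sigLL) volume volume := by
  have h := ((EuclideanSpace.volume_preserving_symm_measurableEquiv_toLp (Fin 2)).symm).comp
    ((volume_preserving_finTwoArrow ℝ).symm)
  convert h using 1
  · rfl
  · rfl

theorem sigLL_norm (p : ℝ × ℝ) : ‖sigLL p‖ = Real.sqrt (p.1 ^ 2 + p.2 ^ 2) := by
  rw [EuclideanSpace.norm_eq]
  congr 1
  simp [Fin.sum_univ_two, sigLL]

theorem sq_sqrt_le {α β M : ℝ} (hM : 0 ≤ M)
    (h : α ^ 2 + β ^ 2 ≤ M * Real.sqrt (α ^ 2 + β ^ 2)) : α ^ 2 + β ^ 2 ≤ M ^ 2 := by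
  have hs := Real.sq_sqrt (by positivity : (0:ℝ) ≤ α ^ 2 + β ^ 2)
  have hsnn := Real.sqrt_nonneg (α ^ 2 + β ^ 2)
  nlinarith [sq_nonneg (M - Real.sqrt (α ^ 2 + β ^ 2))]

theorem enn_half_half (x : ℝ≥0∞) : x ^ ((1:ℝ)/2) * x ^ ((1:ℝ)/2) = x := by
  rcases eq_or_ne x 0 with rfl | hx
  · rw [ENNReal.zero_rpow_of_pos (by norm_num)]; simp
  rcases eq_or_ne x ⊤ with rfl | hx'
  · rw [ENNReal.top_rpow_of_pos (by norm_num)]; simp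
  rw [← ENNReal.rpow_add _ _ hx hx']
  norm_num

theorem enn_amgm (a b : ℝ≥0∞) : 2 * (a ^ ((1:ℝ)/2) * b ^ ((1:ℝ)/2)) ≤ a + b := by
  rcases eq_or_ne a ⊤ with rfl | ha
  · rcases eq_or_ne b 0 with rfl | hb
    · rw [ENNReal.zero_rpow_of_pos (by norm_num)]; simp
    · have hbp : b ^ ((1:ℝ)/2) ≠ 0 := fun h => by
        rcases ENNReal.rpow_eq_zero_iff.mp h with ⟨h1, _⟩ | ⟨_, h2⟩
        · exact hb h1
        · norm_num at h2
      rw [ENNReal.top_rpow_of_pos (by norm_num), ENNReal.top_mul hbp, top_add,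
        ENNReal.mul_top (by norm_num)]
  rcases eq_or_ne b ⊤ with rfl | hb
  · rcases eq_or_ne a 0 with rfl | ha0
    · rw [ENNReal.zero_rpow_of_pos (by norm_num)]; simp
    · have hap : a ^ ((1:ℝ)/2) ≠ 0 := fun h => by
        rcases ENNReal.rpow_eq_zero_iff.mp h with ⟨h1, _⟩ | ⟨_, h2⟩
        · exact ha0 h1
        · norm_num at h2
      rw [ENNReal.top_rpow_of_pos (by norm_num), ENNReal.mul_top hap, add_top,
        ENNReal.mul_top (by norm_num)]
  -- both finite
  have hanm := ENNReal.toReal_nonneg (a := a)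
  have hbnm := ENNReal.toReal_nonneg (a := b)
  rw [← ENNReal.ofReal_toReal ha, ← ENNReal.ofReal_toReal hb,
    ENNReal.ofReal_rpow_of_nonneg hanm (by norm_num),
    ENNReal.ofReal_rpow_of_nonneg hbnm (by norm_num),
    ← ENNReal.ofReal_mul (by positivity), ← ENNReal.ofReal_add hanm hbnm,
    show (2:ℝ≥0∞) = ENNReal.ofReal (2:ℝ) by norm_num, ← ENNReal.ofReal_mul (by norm_num)]
  apply ENNReal.ofReal_le_ofReal
  rw [← Real.sqrt_eq_rpow, ← Real.sqrt_eq_rpow]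
  have h1 : Real.sqrt a.toReal ^ 2 = a.toReal := Real.sq_sqrt hanm
  have h2 : Real.sqrt b.toReal ^ 2 = b.toReal := Real.sq_sqrt hbnm
  have key := sq_nonneg (Real.sqrt a.toReal - Real.sqrt b.toReal)
  rw [sub_sq, h1, h2] at key
  linarith

theorem lint_cs {f g : ℝ × ℝ → ℝ} (hf : Measurable f) (hg : Measurable g)
    (hf0 : ∀ p, 0 ≤ f p) (hg0 : ∀ p, 0 ≤ g p) :
    ∫⁻ p, ENNReal.ofReal (f p * g p) ≤
      (∫⁻ p, ENNReal.ofReal (f p ^ 2)) ^ ((1:ℝ)/2) *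
        (∫⁻ p, ENNReal.ofReal (g p ^ 2)) ^ ((1:ℝ)/2) := by
  have hconj : Real.HolderConjugate 2 2 := Real.HolderConjugate.two_two
  have h := ENNReal.lintegral_mul_le_Lp_mul_Lq (volume : Measure (ℝ × ℝ)) hconj
    hf.ennreal_ofReal.aemeasurable hg.ennreal_ofReal.aemeasurable
  simp only [Pi.mul_apply] at h
  calc ∫⁻ p, ENNReal.ofReal (f p * g p)
      = ∫⁻ p, ENNReal.ofReal (f p) * ENNReal.ofReal (g p) := by
        refine lintegral_congr fun p => ENNReal.ofReal_mul (hf0 p)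
    _ ≤ (∫⁻ p, ENNReal.ofReal (f p) ^ (2:ℝ)) ^ ((1:ℝ)/2) *
        (∫⁻ p, ENNReal.ofReal (g p) ^ (2:ℝ)) ^ ((1:ℝ)/2) := h
    _ = (∫⁻ p, ENNReal.ofReal (f p ^ 2)) ^ ((1:ℝ)/2) *
        (∫⁻ p, ENNReal.ofReal (g p ^ 2)) ^ ((1:ℝ)/2) := by
        congr 1
        · congr 1
          refine lintegral_congr fun p => ?_
          rw [ENNReal.ofReal_rpow_of_nonneg (hf0 p) (by norm_num)]
          congr 1
          rw [show ((2:ℝ)) = ((2:ℕ):ℝ) by norm_num, Real.rpow_natCast]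
        · congr 1
          refine lintegral_congr fun p => ?_
          rw [ENNReal.ofReal_rpow_of_nonneg (hg0 p) (by norm_num)]
          congr 1
          rw [show ((2:ℝ)) = ((2:ℕ):ℝ) by norm_num, Real.rpow_natCast]

theorem main_enn (u : EuclideanSpace ℝ (Fin 2) → EuclideanSpace ℝ (Fin 2))
    (hu : ContDiff ℝ (⊤ : ℕ∞) u) (hsupp : HasCompactSupport u) :
    ∫⁻ x, ENNReal.ofReal (‖u x‖ ^ 4) ≤
      2 * (∫⁻ x, ENNReal.ofReal (‖u x‖ ^ 2)) *
        ∫⁻ x, ENNReal.ofReal (‖fderiv ℝ u x‖ ^ 2) := by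
  have hud : Differentiable ℝ u := hu.differentiable (by simp)
  set U : ℝ × ℝ → EuclideanSpace ℝ (Fin 2) := fun p => u (sigLL p) with hU
  set D : ℝ × ℝ → EuclideanSpace ℝ (Fin 2) →L[ℝ] EuclideanSpace ℝ (Fin 2) :=
    fun p => fderiv ℝ u (sigLL p) with hD
  have hUc : Continuous U := hu.continuous.comp sigLL.continuous
  have hDc : Continuous D := (hu.continuous_fderiv (by simp)).comp sigLL.continuous
  set ee₁ : EuclideanSpace ℝ (Fin 2) := sigLL ((1:ℝ), (0:ℝ)) with hee₁
  set ee₂ : EuclideanSpace ℝ (Fin 2) := sigLL ((0:ℝ), (1:ℝ)) with hee₂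
  have hv : ContDiff ℝ (⊤ : ℕ∞) U := hu.comp sigLL.contDiff
  set w : ℝ × ℝ → ℝ := fun p => ‖U p‖ ^ 2 with hw
  have hwc : ContDiff ℝ (⊤ : ℕ∞) w := hv.norm_sq (𝕜 := ℝ)
  have hUsupp : HasCompactSupport U := hsupp.comp_homeomorph sigLL.toHomeomorph
  have hwsupp : HasCompactSupport w :=
    hUsupp.comp_left (g := fun e : EuclideanSpace ℝ (Fin 2) => ‖e‖ ^ 2) (by simp)
  have hDv : ∀ p, HasFDerivAt U ((D p).comp
      (sigLL : (ℝ × ℝ) →L[ℝ] EuclideanSpace ℝ (Fin 2))) p :=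
    fun p => (hud (sigLL p)).hasFDerivAt.comp p sigLL.hasFDerivAt
  have hw' : ∀ p, HasFDerivAt w
      (2 • (innerSL ℝ (U p)).comp ((D p).comp
        (sigLL : (ℝ × ℝ) →L[ℝ] EuclideanSpace ℝ (Fin 2)))) p :=
    fun p => (hDv p).norm_sq
  have hd1 : ∀ p, fderiv ℝ w p ((1:ℝ), (0:ℝ)) = 2 * ⟪U p, D p ee₁⟫ := by
    intro p
    rw [(hw' p).fderiv]
    simp [hee₁, smul_eq_mul]
  have hd2 : ∀ p, fderiv ℝ w p ((0:ℝ), (1:ℝ)) = 2 * ⟪U p, D p ee₂⟫ := by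
    intro p
    rw [(hw' p).fderiv]
    simp [hee₂, smul_eq_mul]
  set c : ℝ × ℝ → EuclideanSpace ℝ (Fin 2) := fun p => (‖U p‖)⁻¹ • U p with hc
  set a₁ : ℝ × ℝ → ℝ := fun p => ⟪c p, D p ee₁⟫ with ha₁
  set a₂ : ℝ × ℝ → ℝ := fun p => ⟪c p, D p ee₂⟫ with ha₂
  have hca₁ : ∀ p, ‖U p‖ * a₁ p = ⟪U p, D p ee₁⟫ := by
    intro p
    by_cases h : U p = 0
    · simp [ha₁, hc, h]
    · simp only [ha₁, hc, real_inner_smul_left]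
      rw [← mul_assoc, mul_inv_cancel₀ (norm_ne_zero_iff.2 h), one_mul]
  have hca₂ : ∀ p, ‖U p‖ * a₂ p = ⟪U p, D p ee₂⟫ := by
    intro p
    by_cases h : U p = 0
    · simp [ha₂, hc, h]
    · simp only [ha₂, hc, real_inner_smul_left]
      rw [← mul_assoc, mul_inv_cancel₀ (norm_ne_zero_iff.2 h), one_mul]
  have habs₁ : ∀ p, |fderiv ℝ w p ((1:ℝ), (0:ℝ))| = 2 * (‖U p‖ * |a₁ p|) := by
    intro p
    rw [hd1 p, ← hca₁ p, abs_mul, abs_mul, abs_norm]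
    norm_num
  have habs₂ : ∀ p, |fderiv ℝ w p ((0:ℝ), (1:ℝ))| = 2 * (‖U p‖ * |a₂ p|) := by
    intro p
    rw [hd2 p, ← hca₂ p, abs_mul, abs_mul, abs_norm]
    norm_num
  have hc1 : ∀ p, ‖c p‖ ≤ 1 := by
    intro p
    by_cases h : U p = 0
    · simp [hc, h]
    · rw [hc, norm_smul, norm_inv, norm_norm, inv_mul_cancel₀ (norm_ne_zero_iff.2 h)]
  have hkey : ∀ p, a₁ p ^ 2 + a₂ p ^ 2 ≤ ‖D p‖ ^ 2 := by
    intro p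
    have hσ : sigLL (a₁ p, a₂ p) = a₁ p • ee₁ + a₂ p • ee₂ := by
      have hprod : (a₁ p, a₂ p) = a₁ p • ((1:ℝ), (0:ℝ)) + a₂ p • ((0:ℝ), (1:ℝ)) := by
        simp [Prod.ext_iff]
      rw [hprod, map_add, _root_.map_smul, _root_.map_smul]
    have hval : a₁ p ^ 2 + a₂ p ^ 2 = ⟪c p, D p (sigLL (a₁ p, a₂ p))⟫ := by
      rw [hσ, map_add, (D p).map_smul, (D p).map_smul, inner_add_right,
        real_inner_smul_right, real_inner_smul_right]
      ring
    have hb : ⟪c p, D p (sigLL (a₁ p, a₂ p))⟫ ≤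
        ‖D p‖ * Real.sqrt (a₁ p ^ 2 + a₂ p ^ 2) := by
      calc ⟪c p, D p (sigLL (a₁ p, a₂ p))⟫ ≤ ‖c p‖ * ‖D p (sigLL (a₁ p, a₂ p))‖ :=
            real_inner_le_norm _ _
        _ ≤ 1 * (‖D p‖ * ‖sigLL (a₁ p, a₂ p)‖) :=
            mul_le_mul (hc1 p) ((D p).le_opNorm _) (norm_nonneg _) zero_le_one
        _ = ‖D p‖ * Real.sqrt (a₁ p ^ 2 + a₂ p ^ 2) := by rw [one_mul, sigLL_norm]
    exact sq_sqrt_le (norm_nonneg _) (le_trans (le_of_eq hval) hb)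
  have hcm : Measurable c := (hUc.norm.measurable.inv).smul hUc.measurable
  have ha₁m : Measurable a₁ :=
    hcm.inner (((ContinuousLinearMap.apply ℝ _ ee₁).continuous.comp hDc).measurable)
  have ha₂m : Measurable a₂ :=
    hcm.inner (((ContinuousLinearMap.apply ℝ _ ee₂).continuous.comp hDc).measurable)
  -- Hölder bounds
  have hF : (∫⁻ p, ENNReal.ofReal |fderiv ℝ w p ((1:ℝ), (0:ℝ))|) ≤
      2 * ((∫⁻ p, ENNReal.ofReal (‖U p‖ ^ 2)) ^ ((1:ℝ)/2) *
        (∫⁻ p, ENNReal.ofReal (a₁ p ^ 2)) ^ ((1:ℝ)/2)) := by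
    calc (∫⁻ p, ENNReal.ofReal |fderiv ℝ w p ((1:ℝ), (0:ℝ))|)
        = ∫⁻ p, 2 * ENNReal.ofReal (‖U p‖ * |a₁ p|) := by
          refine lintegral_congr fun p => ?_
          rw [habs₁ p, ENNReal.ofReal_mul (by norm_num : (0:ℝ) ≤ 2)]
          norm_num
      _ = 2 * ∫⁻ p, ENNReal.ofReal (‖U p‖ * |a₁ p|) :=
          lintegral_const_mul' _ _ (by norm_num)
      _ ≤ 2 * ((∫⁻ p, ENNReal.ofReal (‖U p‖ ^ 2)) ^ ((1:ℝ)/2) *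
          (∫⁻ p, ENNReal.ofReal (|a₁ p| ^ 2)) ^ ((1:ℝ)/2)) := by
          gcongr
          exact lint_cs hUc.norm.measurable ha₁m.abs
            (fun p => norm_nonneg _) (fun p => abs_nonneg _)
      _ = 2 * ((∫⁻ p, ENNReal.ofReal (‖U p‖ ^ 2)) ^ ((1:ℝ)/2) *
          (∫⁻ p, ENNReal.ofReal (a₁ p ^ 2)) ^ ((1:ℝ)/2)) := by
          have habs : (∫⁻ p, ENNReal.ofReal (|a₁ p| ^ 2)) =
              ∫⁻ p, ENNReal.ofReal (a₁ p ^ 2) :=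
            lintegral_congr fun p => by rw [sq_abs]
          rw [habs]
  have hG : (∫⁻ p, ENNReal.ofReal |fderiv ℝ w p ((0:ℝ), (1:ℝ))|) ≤
      2 * ((∫⁻ p, ENNReal.ofReal (‖U p‖ ^ 2)) ^ ((1:ℝ)/2) *
        (∫⁻ p, ENNReal.ofReal (a₂ p ^ 2)) ^ ((1:ℝ)/2)) := by
    calc (∫⁻ p, ENNReal.ofReal |fderiv ℝ w p ((0:ℝ), (1:ℝ))|)
        = ∫⁻ p, 2 * ENNReal.ofReal (‖U p‖ * |a₂ p|) := by
          refine lintegral_congr fun p => ?_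
          rw [habs₂ p, ENNReal.ofReal_mul (by norm_num : (0:ℝ) ≤ 2)]
          norm_num
      _ = 2 * ∫⁻ p, ENNReal.ofReal (‖U p‖ * |a₂ p|) :=
          lintegral_const_mul' _ _ (by norm_num)
      _ ≤ 2 * ((∫⁻ p, ENNReal.ofReal (‖U p‖ ^ 2)) ^ ((1:ℝ)/2) *
          (∫⁻ p, ENNReal.ofReal (|a₂ p| ^ 2)) ^ ((1:ℝ)/2)) := by
          gcongr
          exact lint_cs hUc.norm.measurable ha₂m.abs
            (fun p => norm_nonneg _) (fun p => abs_nonneg _)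
      _ = 2 * ((∫⁻ p, ENNReal.ofReal (‖U p‖ ^ 2)) ^ ((1:ℝ)/2) *
          (∫⁻ p, ENNReal.ofReal (a₂ p ^ 2)) ^ ((1:ℝ)/2)) := by
          have habs : (∫⁻ p, ENNReal.ofReal (|a₂ p| ^ 2)) =
              ∫⁻ p, ENNReal.ofReal (a₂ p ^ 2) :=
            lintegral_congr fun p => by rw [sq_abs]
          rw [habs]
  set Y : ℝ≥0∞ := ∫⁻ p, ENNReal.ofReal (‖U p‖ ^ 2) with hYdef
  set A₁ : ℝ≥0∞ := ∫⁻ p, ENNReal.ofReal (a₁ p ^ 2) with hA₁def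
  set A₂ : ℝ≥0∞ := ∫⁻ p, ENNReal.ofReal (a₂ p ^ 2) with hA₂def
  set Z : ℝ≥0∞ := ∫⁻ p, ENNReal.ofReal (‖D p‖ ^ 2) with hZdef
  have hAZ : A₁ + A₂ ≤ Z := by
    rw [hA₁def, hA₂def, ← lintegral_add_left ((ha₁m.pow_const 2).ennreal_ofReal)]
    refine lintegral_mono fun p => ?_
    rw [← ENNReal.ofReal_add (sq_nonneg _) (sq_nonneg _)]
    exact ENNReal.ofReal_le_ofReal (hkey p)
  have hmain : (∫⁻ p, ENNReal.ofReal (w p ^ 2)) ≤ 2 * Y * Z := by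
    calc (∫⁻ p, ENNReal.ofReal (w p ^ 2))
        ≤ (∫⁻ p, ENNReal.ofReal |fderiv ℝ w p ((1:ℝ), (0:ℝ))|) *
          (∫⁻ p, ENNReal.ofReal |fderiv ℝ w p ((0:ℝ), (1:ℝ))|) :=
          key2d hwc hwsupp (fun p => by positivity)
      _ ≤ (2 * (Y ^ ((1:ℝ)/2) * A₁ ^ ((1:ℝ)/2))) *
          (2 * (Y ^ ((1:ℝ)/2) * A₂ ^ ((1:ℝ)/2))) := mul_le_mul' hF hG
      _ = (2 * Y) * (2 * ((A₁ ^ ((1:ℝ)/2)) * (A₂ ^ ((1:ℝ)/2)))) := by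
          conv_rhs => rw [← enn_half_half Y]
          ring
      _ ≤ (2 * Y) * (A₁ + A₂) := mul_le_mul_right (enn_amgm A₁ A₂) _
      _ ≤ (2 * Y) * Z := mul_le_mul_right hAZ _
      _ = 2 * Y * Z := rfl
  -- transfer via measure preservation
  have hXeq : (∫⁻ p, ENNReal.ofReal (w p ^ 2)) = ∫⁻ x, ENNReal.ofReal (‖u x‖ ^ 4) := by
    have := sigLL_mp.lintegral_comp
      (f := fun x => ENNReal.ofReal (‖u x‖ ^ 4))
      (by exact (hu.continuous.norm.pow 4).measurable.ennreal_ofReal)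
    rw [← this]
    refine lintegral_congr fun p => ?_
    rw [hw]
    norm_num [← pow_mul]
    rfl
  have hYeq : Y = ∫⁻ x, ENNReal.ofReal (‖u x‖ ^ 2) := by
    rw [hYdef]
    exact sigLL_mp.lintegral_comp (f := fun x => ENNReal.ofReal (‖u x‖ ^ 2))
      (by exact (hu.continuous.norm.pow 2).measurable.ennreal_ofReal)
  have hZeq : Z = ∫⁻ x, ENNReal.ofReal (‖fderiv ℝ u x‖ ^ 2) := by
    rw [hZdef]
    exact sigLL_mp.lintegral_comp (f := fun x => ENNReal.ofReal (‖fderiv ℝ u x‖ ^ 2))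
      (by exact ((hu.continuous_fderiv (by simp)).norm.pow 2).measurable.ennreal_ofReal)
  rw [← hXeq, ← hYeq, ← hZeq]
  exact hmain

theorem ladyzhenskaya_2d
    (u : EuclideanSpace ℝ (Fin 2) → EuclideanSpace ℝ (Fin 2))
    (hu : ContDiff ℝ (⊤ : ℕ∞) u) (hsupp : HasCompactSupport u) :
    (∫ x, ‖u x‖ ^ 4) ^ ((1:ℝ)/4) ≤
      (2 : ℝ) ^ ((1:ℝ)/4) * ((∫ x, ‖u x‖ ^ 2) ^ ((1:ℝ)/2)) ^ ((1:ℝ)/2) *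
        ((∫ x, ‖fderiv ℝ u x‖ ^ 2) ^ ((1:ℝ)/2)) ^ ((1:ℝ)/2) := by
  have hcont : Continuous u := hu.continuous
  have hDcont : Continuous (fderiv ℝ u) := hu.continuous_fderiv (by simp)
  have hi4 : Integrable (fun x => ‖u x‖ ^ 4) :=
    (hcont.norm.pow 4).integrable_of_hasCompactSupport
      (by have h := hsupp.comp_left (g := fun e : EuclideanSpace ℝ (Fin 2) => ‖e‖ ^ 4) (by simp); exact h)
  have hi2 : Integrable (fun x => ‖u x‖ ^ 2) :=
    (hcont.norm.pow 2).integrable_of_hasCompactSupport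
      (by have h := hsupp.comp_left (g := fun e : EuclideanSpace ℝ (Fin 2) => ‖e‖ ^ 2) (by simp); exact h)
  have hiD : Integrable (fun x => ‖fderiv ℝ u x‖ ^ 2) :=
    (hDcont.norm.pow 2).integrable_of_hasCompactSupport
      (by have h := ((hsupp.fderiv ℝ).comp_left
        (g := fun L : EuclideanSpace ℝ (Fin 2) →L[ℝ] EuclideanSpace ℝ (Fin 2) => ‖L‖ ^ 2)
        (by simp)); exact h)
  have h4nn : 0 ≤ ∫ x, ‖u x‖ ^ 4 := integral_nonneg fun x => by positivity
  have h2nn : 0 ≤ ∫ x, ‖u x‖ ^ 2 := integral_nonneg fun x => by positivity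
  have hDnn : 0 ≤ ∫ x, ‖fderiv ℝ u x‖ ^ 2 := integral_nonneg fun x => by positivity
  have key : (∫ x, ‖u x‖ ^ 4) ≤ 2 * (∫ x, ‖u x‖ ^ 2) * ∫ x, ‖fderiv ℝ u x‖ ^ 2 := by
    have h := main_enn u hu hsupp
    have e4 := ofReal_integral_eq_lintegral_ofReal hi4
      (Filter.Eventually.of_forall fun x => by positivity)
    have e2 := ofReal_integral_eq_lintegral_ofReal hi2
      (Filter.Eventually.of_forall fun x => by positivity)
    have eD := ofReal_integral_eq_lintegral_ofReal hiD
      (Filter.Eventually.of_forall fun x => by positivity)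
    have h' : ENNReal.ofReal (∫ x, ‖u x‖ ^ 4) ≤
        ENNReal.ofReal (2 * (∫ x, ‖u x‖ ^ 2) * ∫ x, ‖fderiv ℝ u x‖ ^ 2) := by
      rw [e4, ENNReal.ofReal_mul (by positivity), ENNReal.ofReal_mul (by norm_num),
        e2, eD, show ENNReal.ofReal (2:ℝ) = 2 by norm_num]
      exact h
    exact (ENNReal.ofReal_le_ofReal_iff (by positivity)).mp h'
  have hRHS1 : ((∫ x, ‖u x‖ ^ 2) ^ ((1:ℝ)/2)) ^ ((1:ℝ)/2) =
      (∫ x, ‖u x‖ ^ 2) ^ ((1:ℝ)/4) := by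
    rw [← Real.rpow_mul h2nn]; norm_num
  have hRHS2 : ((∫ x, ‖fderiv ℝ u x‖ ^ 2) ^ ((1:ℝ)/2)) ^ ((1:ℝ)/2) =
      (∫ x, ‖fderiv ℝ u x‖ ^ 2) ^ ((1:ℝ)/4) := by
    rw [← Real.rpow_mul hDnn]; norm_num
  calc (∫ x, ‖u x‖ ^ 4) ^ ((1:ℝ)/4)
      ≤ (2 * (∫ x, ‖u x‖ ^ 2) * ∫ x, ‖fderiv ℝ u x‖ ^ 2) ^ ((1:ℝ)/4) :=
        Real.rpow_le_rpow h4nn key (by norm_num)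
    _ = (2:ℝ) ^ ((1:ℝ)/4) * (∫ x, ‖u x‖ ^ 2) ^ ((1:ℝ)/4) *
        (∫ x, ‖fderiv ℝ u x‖ ^ 2) ^ ((1:ℝ)/4) := by
        rw [Real.mul_rpow (by positivity) hDnn, Real.mul_rpow (by norm_num) h2nn]
    _ = (2:ℝ) ^ ((1:ℝ)/4) * ((∫ x, ‖u x‖ ^ 2) ^ ((1:ℝ)/2)) ^ ((1:ℝ)/2) *
        ((∫ x, ‖fderiv ℝ u x‖ ^ 2) ^ ((1:ℝ)/2)) ^ ((1:ℝ)/2) := by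
        rw [hRHS1, hRHS2]
end

section
/- For any vector field u : ℝ³ → ℝ³ that is smooth with compact support, ‖u‖_{L⁴(ℝ³)} ≤ (4/(3√3)) · ‖u‖_{L²(ℝ³)}^{1/4} · ‖∇u‖_{L²(ℝ³)}^{3/4}. -/
open MeasureTheory Real Topology
open scoped ENNReal NNReal RealInnerProductSpace

noncomputable section LadyzhenskayaAux

namespace LadyzhenskayaAux

abbrev E3 : Type := EuclideanSpace ℝ (Fin 3)

def ee (i : Fin 3) : E3 := EuclideanSpace.single i 1

lemma norm_ee (i : Fin 3) : ‖ee i‖ = 1 := by simp [ee]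

/-! ### 1D lemma -/

lemma sq_le_integral_abs_mul {s : ℝ → ℝ} (hs : ContDiff ℝ 1 s) (hc : HasCompactSupport s) (b : ℝ) :
    s b ^ 2 ≤ ∫ t, |s t| * |deriv s t| := by
  set h : ℝ → ℝ := fun t => s t * s t with hh
  have hsd := hs.differentiable one_ne_zero
  have hh1 : ContDiff ℝ 1 h := hs.mul hs
  have hch : HasCompactSupport h := hc.mul_left
  have hderiv : ∀ t, deriv h t = 2 * (s t * deriv s t) := by
    intro t
    have := ((hsd t).hasDerivAt.mul (hsd t).hasDerivAt).deriv
    rw [show h = s * s from rfl, this]; ring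
  have hcont : Continuous (fun t => |s t| * |deriv s t|) :=
    (hs.continuous.abs).mul ((hs.continuous_deriv le_rfl).abs)
  have hcs2 : HasCompactSupport (fun t => |s t| * |deriv s t|) := (hc.abs).mul_right
  have hint : Integrable (fun t => |s t| * |deriv s t|) :=
    hcont.integrable_of_hasCompactSupport hcs2
  have habs : ∀ t, |deriv h t| = 2 * (|s t| * |deriv s t|) := by
    intro t; rw [hderiv t, abs_mul, abs_mul]; simp [abs_of_nonneg]
  have hintd' : Integrable (deriv h) :=
    (hh1.continuous_deriv le_rfl).integrable_of_hasCompactSupport hch.deriv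
  have hintd : Integrable (fun t => |deriv h t|) := hintd'.abs
  have e1 : h b = ∫ t in Set.Iic b, deriv h t := (hch.integral_Iic_deriv_eq hh1 b).symm
  have e2 : h b = -∫ t in Set.Ioi b, deriv h t := by
    rw [hch.integral_Ioi_deriv_eq hh1 b]; ring
  have sum1 : (∫ t in Set.Iic b, |deriv h t|) + (∫ t in Set.Ioi b, |deriv h t|) = ∫ t, |deriv h t| :=
    intervalIntegral.integral_Iic_add_Ioi hintd.integrableOn hintd.integrableOn
  have b2 : 2 * h b ≤ ∫ t, |deriv h t| := by
    have i1 : h b ≤ ∫ t in Set.Iic b, |deriv h t| := by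
      rw [e1]
      exact integral_mono hintd'.integrableOn hintd.integrableOn (fun t => le_abs_self _)
    have i2 : h b ≤ ∫ t in Set.Ioi b, |deriv h t| := by
      rw [e2, ← integral_neg]
      exact integral_mono hintd'.neg.integrableOn hintd.integrableOn (fun t => neg_le_abs _)
    linarith
  have final : h b ≤ ∫ t, |s t| * |deriv s t| := by
    have : (∫ t, |deriv h t|) = 2 * ∫ t, |s t| * |deriv s t| := by
      rw [← MeasureTheory.integral_const_mul]
      exact integral_congr_ae (Filter.Eventually.of_forall fun t => habs t)
    nlinarith [b2, this]
  calc s b ^ 2 = h b := by simp [hh, sq]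
    _ ≤ _ := final

/-! ### sections along coordinate lines -/

lemma section_cs {φ : E3 → ℝ} (hc : HasCompactSupport φ) (x₀ e : E3) (he : ‖e‖ = 1) :
    HasCompactSupport (fun t : ℝ => φ (x₀ + t • e)) := by
  apply HasCompactSupport.intro (K := (fun y : E3 => (inner ℝ (y - x₀) e : ℝ)) '' tsupport φ)
  · exact hc.image ((continuous_id.sub continuous_const).inner continuous_const)
  · intro t ht
    by_contra hst
    apply ht
    refine ⟨x₀ + t • e, subset_tsupport _ hst, ?_⟩
    show (inner ℝ (x₀ + t • e - x₀) e : ℝ) = t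
    have h9 : (x₀ + t • e - x₀) = t • e := by abel
    rw [h9, real_inner_smul_left]
    have h8 : (inner ℝ e e : ℝ) = 1 := by
      rw [real_inner_self_eq_norm_sq, he]; norm_num
    rw [h8]; ring

lemma section_sq_le {φ : E3 → ℝ} (hφ : ContDiff ℝ 1 φ) (hc : HasCompactSupport φ)
    (x₀ : E3) (e : E3) (he : ‖e‖ = 1) (a : ℝ) :
    φ (x₀ + a • e) ^ 2 ≤ ∫ t : ℝ, |φ (x₀ + t • e)| * |fderiv ℝ φ (x₀ + t • e) e| := by
  set L : ℝ → E3 := fun t => x₀ + (t : ℝ) • e with hLdef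
  have hLd : ∀ t : ℝ, HasDerivAt L e t := by
    intro t
    have h1 : HasDerivAt (fun t : ℝ => (t : ℝ) • e) ((1:ℝ) • e) t :=
      (hasDerivAt_id t).smul_const e
    simpa [hLdef] using h1.const_add x₀
  have hLcd : ContDiff ℝ 1 L :=
    contDiff_const.add (contDiff_id.smul contDiff_const)
  set s : ℝ → ℝ := fun t => φ (L t) with hsdef
  have hs : ContDiff ℝ 1 s := hφ.comp hLcd
  have hsder : ∀ t, deriv s t = fderiv ℝ φ (L t) e := by
    intro t
    exact (((hφ.differentiable one_ne_zero (L t)).hasFDerivAt).comp_hasDerivAt t (hLd t)).deriv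
  have hscs : HasCompactSupport s := section_cs hc x₀ e he
  calc φ (x₀ + a • e) ^ 2 = s a ^ 2 := by simp [hsdef, hLdef]
    _ ≤ ∫ t, |s t| * |deriv s t| := sq_le_integral_abs_mul hs hscs a
    _ = _ := by
        refine integral_congr_ae (Filter.Eventually.of_forall fun t => ?_)
        show |s t| * |deriv s t| = _
        rw [hsder t]

/-! ### main chain in ℝ≥0∞ on ℝ × ℝ × ℝ -/

lemma half_sq (x : ℝ≥0∞) : (x ^ ((1:ℝ)/2)) ^ (2:ℕ) = x := by
  rw [← ENNReal.rpow_natCast (x ^ ((1:ℝ)/2)) 2, ← ENNReal.rpow_mul]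
  norm_num

lemma lintegral_CS {α : Type*} [MeasurableSpace α] (μ : Measure α) {f g : α → ℝ≥0∞}
    (hf : AEMeasurable f μ) (hg : AEMeasurable g μ) :
    ∫⁻ x, f x * g x ∂μ ≤ (∫⁻ x, f x ^ (2:ℕ) ∂μ) ^ ((1:ℝ)/2) * (∫⁻ x, g x ^ (2:ℕ) ∂μ) ^ ((1:ℝ)/2) := by
  have hpq : Real.HolderConjugate 2 2 := Real.HolderConjugate.two_two
  have h := ENNReal.lintegral_mul_le_Lp_mul_Lq μ hpq hf hg
  have e : ∀ φ : α → ℝ≥0∞, ∫⁻ x, φ x ^ (2:ℝ) ∂μ = ∫⁻ x, φ x ^ (2:ℕ) ∂μ := by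
    intro φ
    refine lintegral_congr fun x => ?_
    rw [← ENNReal.rpow_natCast (φ x) 2]; norm_num
  simpa [Pi.mul_apply, e] using h

lemma main_chain (F F1 F2 F3 : ℝ × ℝ × ℝ → ℝ≥0∞)
    (hF : Measurable F) (h1 : Measurable F1) (h2 : Measurable F2) (h3 : Measurable F3)
    (k1 : ∀ c a b : ℝ, F (c,(a,b)) ^ (2:ℕ) ≤ ∫⁻ t : ℝ, F (c,(t,b)) * F1 (c,(t,b)))
    (k2 : ∀ c a b : ℝ, F (c,(a,b)) ^ (2:ℕ) ≤ ∫⁻ t : ℝ, F (c,(a,t)) * F2 (c,(a,t)))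
    (k3 : ∀ c a b : ℝ, F (c,(a,b)) ^ (2:ℕ) ≤ ∫⁻ t : ℝ, F (t,(a,b)) * F3 (t,(a,b))) :
    ∫⁻ p, F p ^ (4:ℕ) ≤ (∫⁻ p, F p ^ (2:ℕ)) ^ ((1:ℝ)/2) * (∫⁻ p, F1 p ^ (2:ℕ)) ^ ((1:ℝ)/2)
      * (∫⁻ p, F2 p ^ (2:ℕ)) ^ ((1:ℝ)/2) * (∫⁻ p, F3 p ^ (2:ℕ)) ^ ((1:ℝ)/2) := by
  have fub2 : ∀ (G : ℝ × ℝ → ℝ≥0∞), Measurable G → ∫⁻ z, G z = ∫⁻ x, ∫⁻ y, G (x, y) := by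
    intro G hG
    rw [← lintegral_prod G hG.aemeasurable, ← Measure.volume_eq_prod]
  have fub3 : ∀ (G : ℝ × ℝ × ℝ → ℝ≥0∞), Measurable G →
      ∫⁻ p, G p = ∫⁻ c, ∫⁻ q : ℝ × ℝ, G (c, q) := by
    intro G hG
    rw [← lintegral_prod G hG.aemeasurable, ← Measure.volume_eq_prod]
  set A : ℝ → ℝ → ℝ≥0∞ := fun c b => ∫⁻ t : ℝ, F (c,(t,b)) * F1 (c,(t,b)) with hA
  set B : ℝ → ℝ → ℝ≥0∞ := fun c a => ∫⁻ t : ℝ, F (c,(a,t)) * F2 (c,(a,t)) with hB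
  set hh : ℝ → ℝ≥0∞ := fun c => ∫⁻ q : ℝ × ℝ, F (c, q) ^ (2:ℕ) with hhh
  set p1 : ℝ → ℝ≥0∞ := fun c => ∫⁻ q : ℝ × ℝ, F1 (c, q) ^ (2:ℕ) with hp1
  set p2 : ℝ → ℝ≥0∞ := fun c => ∫⁻ q : ℝ × ℝ, F2 (c, q) ^ (2:ℕ) with hp2
  have measA : ∀ c, Measurable (fun b => A c b) := by
    intro c
    apply Measurable.lintegral_prod_right'
      (f := fun z : ℝ × ℝ => F (c,(z.2,z.1)) * F1 (c,(z.2,z.1)))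
    have hmap : Measurable (fun z : ℝ × ℝ => ((c, (z.2, z.1)) : ℝ × ℝ × ℝ)) :=
      measurable_const.prodMk (measurable_snd.prodMk measurable_fst)
    exact (hF.comp hmap).mul (h1.comp hmap)
  have measB : ∀ c, Measurable (fun a => B c a) := by
    intro c
    apply Measurable.lintegral_prod_right'
      (f := fun z : ℝ × ℝ => F (c,(z.1,z.2)) * F2 (c,(z.1,z.2)))
    have hmap : Measurable (fun z : ℝ × ℝ => ((c, (z.1, z.2)) : ℝ × ℝ × ℝ)) :=
      measurable_const.prodMk (measurable_fst.prodMk measurable_snd)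
    exact (hF.comp hmap).mul (h2.comp hmap)
  have measp1 : Measurable p1 :=
    Measurable.lintegral_prod_right' (f := fun p : ℝ × (ℝ × ℝ) => F1 p ^ (2:ℕ)) (h1.pow_const 2)
  have measp2 : Measurable p2 :=
    Measurable.lintegral_prod_right' (f := fun p : ℝ × (ℝ × ℝ) => F2 p ^ (2:ℕ)) (h2.pow_const 2)
  have inner2D : ∀ c : ℝ, (∫⁻ q : ℝ × ℝ, F (c, q) ^ (4:ℕ)) ≤ (∫⁻ b, A c b) * (∫⁻ a, B c a) := by
    intro c
    have e1 : (∫⁻ q : ℝ × ℝ, F (c, q) ^ (4:ℕ)) = ∫⁻ a, ∫⁻ b, F (c,(a,b)) ^ (4:ℕ) := by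
      apply fub2 (fun q => F (c, q) ^ (4:ℕ))
      exact ((hF.comp (measurable_const.prodMk measurable_id)).pow_const 4)
    rw [e1]
    have point : ∀ a b : ℝ, F (c,(a,b)) ^ (4:ℕ) ≤ A c b * B c a := by
      intro a b
      have : F (c,(a,b)) ^ (4:ℕ) = F (c,(a,b)) ^ (2:ℕ) * F (c,(a,b)) ^ (2:ℕ) := by
        rw [← pow_add]
      rw [this]
      exact mul_le_mul' (k1 c a b) (k2 c a b)
    calc (∫⁻ a, ∫⁻ b, F (c,(a,b)) ^ (4:ℕ))
        ≤ ∫⁻ a, ∫⁻ b, A c b * B c a := by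
          refine lintegral_mono fun a => lintegral_mono fun b => point a b
      _ = ∫⁻ a, (∫⁻ b, A c b) * B c a := by
          refine lintegral_congr fun a => ?_
          exact lintegral_mul_const _ (measA c)
      _ = (∫⁻ b, A c b) * (∫⁻ a, B c a) := lintegral_const_mul _ (measB c)
  have half_mul_half : ∀ x : ℝ≥0∞, x ^ ((1:ℝ)/2) * x ^ ((1:ℝ)/2) = x := by
    intro x
    rw [← ENNReal.rpow_add_of_nonneg _ _ (by norm_num) (by norm_num)]
    norm_num
  set S0 := (∫⁻ p, F p ^ (2:ℕ)) ^ ((1:ℝ)/2) with hS0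
  set S1 := (∫⁻ p, F1 p ^ (2:ℕ)) ^ ((1:ℝ)/2) with hS1
  set S2 := (∫⁻ p, F2 p ^ (2:ℕ)) ^ ((1:ℝ)/2) with hS2
  set S3 := (∫⁻ p, F3 p ^ (2:ℕ)) ^ ((1:ℝ)/2) with hS3
  have bndA : ∀ c : ℝ, (∫⁻ b, A c b) ≤ hh c ^ ((1:ℝ)/2) * p1 c ^ ((1:ℝ)/2) := by
    intro c
    have hmapz : Measurable (fun z : ℝ × ℝ => ((c, z) : ℝ × ℝ × ℝ)) :=
      measurable_const.prodMk measurable_id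
    have hmeasG : Measurable (fun z : ℝ × ℝ => F (c, z) * F1 (c, z)) :=
      (hF.comp hmapz).mul (h1.comp hmapz)
    have huncurry : Measurable (Function.uncurry (fun b t : ℝ => F (c,(t,b)) * F1 (c,(t,b)))) := by
      have hmap : Measurable (fun z : ℝ × ℝ => ((c, (z.2, z.1)) : ℝ × ℝ × ℝ)) :=
        measurable_const.prodMk (measurable_snd.prodMk measurable_fst)
      exact (hF.comp hmap).mul (h1.comp hmap)
    have e : (∫⁻ b, A c b) = ∫⁻ z : ℝ × ℝ, F (c, z) * F1 (c, z) := by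
      calc (∫⁻ b, A c b) = ∫⁻ b, ∫⁻ t, F (c,(t,b)) * F1 (c,(t,b)) := rfl
        _ = ∫⁻ t, ∫⁻ b, F (c,(t,b)) * F1 (c,(t,b)) := lintegral_lintegral_swap huncurry.aemeasurable
        _ = ∫⁻ z : ℝ × ℝ, F (c, z) * F1 (c, z) := (fub2 _ hmeasG).symm
    rw [e]
    exact lintegral_CS volume (hF.comp hmapz).aemeasurable (h1.comp hmapz).aemeasurable
  have bndB : ∀ c : ℝ, (∫⁻ a, B c a) ≤ hh c ^ ((1:ℝ)/2) * p2 c ^ ((1:ℝ)/2) := by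
    intro c
    have hmapz : Measurable (fun z : ℝ × ℝ => ((c, z) : ℝ × ℝ × ℝ)) :=
      measurable_const.prodMk measurable_id
    have hmeasG : Measurable (fun z : ℝ × ℝ => F (c, z) * F2 (c, z)) :=
      (hF.comp hmapz).mul (h2.comp hmapz)
    have e : (∫⁻ a, B c a) = ∫⁻ z : ℝ × ℝ, F (c, z) * F2 (c, z) := (fub2 _ hmeasG).symm
    rw [e]
    exact lintegral_CS volume (hF.comp hmapz).aemeasurable (h2.comp hmapz).aemeasurable
  have bndh : ∀ c : ℝ, hh c ≤ S0 * S3 := by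
    intro c
    have huncurry :
        Measurable (Function.uncurry (fun (z : ℝ × ℝ) (t : ℝ) => F (t, z) * F3 (t, z))) := by
      have hmap : Measurable (fun w : (ℝ × ℝ) × ℝ => ((w.2, w.1) : ℝ × ℝ × ℝ)) :=
        measurable_snd.prodMk measurable_fst
      exact (hF.comp hmap).mul (h3.comp hmap)
    calc hh c = ∫⁻ z : ℝ × ℝ, F (c, z) ^ (2:ℕ) := rfl
      _ ≤ ∫⁻ z : ℝ × ℝ, ∫⁻ t, F (t, z) * F3 (t, z) := by
          refine lintegral_mono fun z => ?_
          simpa using k3 c z.1 z.2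
      _ = ∫⁻ t, ∫⁻ z : ℝ × ℝ, F (t, z) * F3 (t, z) := lintegral_lintegral_swap huncurry.aemeasurable
      _ = ∫⁻ p, F p * F3 p := (fub3 _ (hF.mul h3)).symm
      _ ≤ S0 * S3 := lintegral_CS volume hF.aemeasurable h3.aemeasurable
  have measq1 : Measurable fun c => p1 c ^ ((1:ℝ)/2) :=
    (ENNReal.continuous_rpow_const.measurable).comp measp1
  have measq2 : Measurable fun c => p2 c ^ ((1:ℝ)/2) :=
    (ENNReal.continuous_rpow_const.measurable).comp measp2
  calc ∫⁻ p, F p ^ (4:ℕ)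
      = ∫⁻ c, ∫⁻ q : ℝ × ℝ, F (c, q) ^ (4:ℕ) := fub3 _ (hF.pow_const 4)
    _ ≤ ∫⁻ c, (∫⁻ b, A c b) * (∫⁻ a, B c a) := lintegral_mono inner2D
    _ ≤ ∫⁻ c, (hh c ^ ((1:ℝ)/2) * p1 c ^ ((1:ℝ)/2)) * (hh c ^ ((1:ℝ)/2) * p2 c ^ ((1:ℝ)/2)) :=
        lintegral_mono fun c => mul_le_mul' (bndA c) (bndB c)
    _ = ∫⁻ c, hh c * (p1 c ^ ((1:ℝ)/2) * p2 c ^ ((1:ℝ)/2)) := by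
        refine lintegral_congr fun c => ?_
        calc (hh c ^ ((1:ℝ)/2) * p1 c ^ ((1:ℝ)/2)) * (hh c ^ ((1:ℝ)/2) * p2 c ^ ((1:ℝ)/2))
            = (hh c ^ ((1:ℝ)/2) * hh c ^ ((1:ℝ)/2)) * (p1 c ^ ((1:ℝ)/2) * p2 c ^ ((1:ℝ)/2)) := by
              ring
          _ = hh c * (p1 c ^ ((1:ℝ)/2) * p2 c ^ ((1:ℝ)/2)) := by rw [half_mul_half]
    _ ≤ ∫⁻ c, (S0 * S3) * (p1 c ^ ((1:ℝ)/2) * p2 c ^ ((1:ℝ)/2)) :=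
        lintegral_mono fun c => mul_le_mul_left (bndh c) _
    _ = (S0 * S3) * ∫⁻ c, p1 c ^ ((1:ℝ)/2) * p2 c ^ ((1:ℝ)/2) :=
        lintegral_const_mul _ (measq1.mul measq2)
    _ ≤ (S0 * S3) * ((∫⁻ c, (p1 c ^ ((1:ℝ)/2)) ^ (2:ℕ)) ^ ((1:ℝ)/2)
          * (∫⁻ c, (p2 c ^ ((1:ℝ)/2)) ^ (2:ℕ)) ^ ((1:ℝ)/2)) :=
        mul_le_mul_right (lintegral_CS volume measq1.aemeasurable measq2.aemeasurable) _
    _ = (S0 * S3) * ((∫⁻ c, p1 c) ^ ((1:ℝ)/2) * (∫⁻ c, p2 c) ^ ((1:ℝ)/2)) := by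
        simp only [half_sq]
    _ = (S0 * S3) * (S1 * S2) := by
        rw [hS1, hS2, ← fub3 _ (h1.pow_const 2), ← fub3 _ (h2.pow_const 2)]
    _ = S0 * S1 * S2 * S3 := by ring

/-! ### transfer to Euclidean space -/

def psi3 : ℝ × ℝ × ℝ → E3 := fun p =>
  (MeasurableEquiv.toLp 2 (Fin 3 → ℝ))
    ((MeasurableEquiv.piFinSuccAbove (fun _ : Fin 3 => ℝ) 0).symm
      (p.1, MeasurableEquiv.finTwoArrow.symm p.2))

lemma psi3_mp : MeasurePreserving psi3 volume volume := by
  have s1 := (EuclideanSpace.volume_preserving_symm_measurableEquiv_toLp (Fin 3)).symm _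
  have s2 := (volume_preserving_piFinSuccAbove (fun _ : Fin 3 => ℝ) 0).symm _
  have s3 := (volume_preserving_finTwoArrow ℝ).symm _
  have sp : MeasurePreserving (Prod.map (id : ℝ → ℝ) (⇑MeasurableEquiv.finTwoArrow.symm))
      volume volume := (MeasurePreserving.id volume).prod s3
  have : psi3 = (⇑(MeasurableEquiv.toLp 2 (Fin 3 → ℝ))) ∘
      (⇑(MeasurableEquiv.piFinSuccAbove (fun _ : Fin 3 => ℝ) 0).symm) ∘
      (Prod.map (id : ℝ → ℝ) (⇑MeasurableEquiv.finTwoArrow.symm)) := rfl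
  rw [this]
  exact s1.comp (s2.comp sp)

lemma psi3_apply (c a b : ℝ) : psi3 (c, (a, b)) = c • ee 0 + a • ee 1 + b • ee 2 := by
  have key : psi3 (c, (a, b)) = (WithLp.equiv 2 (Fin 3 → ℝ)).symm (Fin.cons c ![a, b]) := by
    simp only [psi3, MeasurableEquiv.coe_toLp,
      MeasurableEquiv.piFinSuccAbove_symm_apply, MeasurableEquiv.finTwoArrow_symm_apply,
      Fin.insertNthEquiv, Equiv.coe_fn_mk, Fin.insertNth_zero]
    rfl
  rw [key]
  ext j
  rw [WithLp.equiv_symm_apply]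
  have h0 : (1 : Fin 3) = Fin.succ 0 := rfl
  have h1 : (2 : Fin 3) = Fin.succ 1 := rfl
  fin_cases j
  · show _ = (c • ee 0 + a • ee 1 + b • ee 2) 0
    simp [ee, EuclideanSpace.single_apply, PiLp.add_apply, PiLp.smul_apply]
  · show (Fin.cons c ![a, b] : Fin 3 → ℝ) 1 = (c • ee 0 + a • ee 1 + b • ee 2) 1
    rw [h0, Fin.cons_succ]
    simp [ee, EuclideanSpace.single_apply, PiLp.add_apply, PiLp.smul_apply]
  · show (Fin.cons c ![a, b] : Fin 3 → ℝ) 2 = (c • ee 0 + a • ee 1 + b • ee 2) 2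
    rw [h1, Fin.cons_succ]
    simp [ee, EuclideanSpace.single_apply, PiLp.add_apply, PiLp.smul_apply]

set_option linter.unusedTactic false in
set_option linter.unreachableTactic false in
lemma scalar_step {φ : E3 → ℝ} (hφ : ContDiff ℝ 1 φ) (hc : HasCompactSupport φ) :
    ∫ x, φ x ^ 4 ≤ (∫ x, φ x ^ 2) ^ ((1:ℝ)/2) *
      ((∫ x, (fderiv ℝ φ x (ee 0)) ^ 2) ^ ((1:ℝ)/2) *
       (∫ x, (fderiv ℝ φ x (ee 1)) ^ 2) ^ ((1:ℝ)/2) *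
       (∫ x, (fderiv ℝ φ x (ee 2)) ^ 2) ^ ((1:ℝ)/2)) := by
  have hφc : Continuous φ := hφ.continuous
  have hdc : ∀ i : Fin 3, Continuous (fun x => fderiv ℝ φ x (ee i)) := fun i =>
    (hφ.continuous_fderiv one_ne_zero).clm_apply continuous_const
  have hdcs : ∀ i : Fin 3, HasCompactSupport (fun x => fderiv ℝ φ x (ee i)) := by
    intro i
    have h1 : HasCompactSupport (fderiv ℝ φ) := hc.fderiv (𝕜 := ℝ)
    exact h1.comp_left (g := fun L : E3 →L[ℝ] ℝ => L (ee i)) rfl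
  have hψm : Measurable psi3 := psi3_mp.measurable
  set F : ℝ × ℝ × ℝ → ℝ≥0∞ := fun p => (‖φ (psi3 p)‖₊ : ℝ≥0∞) with hF
  set D : Fin 3 → ℝ × ℝ × ℝ → ℝ≥0∞ :=
    fun i p => (‖fderiv ℝ φ (psi3 p) (ee i)‖₊ : ℝ≥0∞) with hD
  have hFm : Measurable F := (hφc.measurable.comp hψm).nnnorm.coe_nnreal_ennreal
  have hDm : ∀ i, Measurable (D i) := fun i =>
    (((hdc i).measurable).comp hψm).nnnorm.coe_nnreal_ennreal
  have key : ∀ (i : Fin 3) (x₀ : E3) (a : ℝ),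
      (‖φ (x₀ + a • ee i)‖₊ : ℝ≥0∞) ^ (2:ℕ) ≤
        ∫⁻ t : ℝ, (‖φ (x₀ + t • ee i)‖₊ : ℝ≥0∞) * ‖fderiv ℝ φ (x₀ + t • ee i) (ee i)‖₊ := by
    intro i x₀ a
    have hsec := section_sq_le hφ hc x₀ (ee i) (norm_ee i) a
    have hscs : HasCompactSupport (fun t : ℝ => φ (x₀ + t • ee i)) :=
      section_cs hc x₀ (ee i) (norm_ee i)
    have hLc : Continuous (fun t : ℝ => x₀ + t • ee i) :=
      continuous_const.add (continuous_id.smul continuous_const)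
    have hint : Integrable (fun t : ℝ =>
        |φ (x₀ + t • ee i)| * |fderiv ℝ φ (x₀ + t • ee i) (ee i)|) := by
      apply Continuous.integrable_of_hasCompactSupport
      · exact ((hφc.comp hLc).abs).mul (((hdc i).comp hLc).abs)
      · exact (hscs.abs).mul_right
    calc (‖φ (x₀ + a • ee i)‖₊ : ℝ≥0∞) ^ (2:ℕ)
        = ENNReal.ofReal (φ (x₀ + a • ee i) ^ 2) := by
          rw [← enorm_eq_nnnorm, Real.enorm_eq_ofReal_abs, ← ENNReal.ofReal_pow (abs_nonneg _), sq_abs]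
      _ ≤ ENNReal.ofReal (∫ t : ℝ, |φ (x₀ + t • ee i)| * |fderiv ℝ φ (x₀ + t • ee i) (ee i)|) :=
          ENNReal.ofReal_le_ofReal hsec
      _ = ∫⁻ t : ℝ, ENNReal.ofReal (|φ (x₀ + t • ee i)| * |fderiv ℝ φ (x₀ + t • ee i) (ee i)|) :=
          ofReal_integral_eq_lintegral_ofReal hint
            (Filter.Eventually.of_forall fun t => mul_nonneg (abs_nonneg _) (abs_nonneg _))
      _ = ∫⁻ t : ℝ, (‖φ (x₀ + t • ee i)‖₊ : ℝ≥0∞) * ‖fderiv ℝ φ (x₀ + t • ee i) (ee i)‖₊ := by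
          refine lintegral_congr fun t => ?_
          rw [ENNReal.ofReal_mul (abs_nonneg _), ← Real.enorm_eq_ofReal_abs, ← Real.enorm_eq_ofReal_abs,
              enorm_eq_nnnorm, enorm_eq_nnnorm]
  have k1 : ∀ c a b : ℝ, F (c,(a,b)) ^ (2:ℕ) ≤ ∫⁻ t : ℝ, F (c,(t,b)) * D 1 (c,(t,b)) := by
    intro c a b
    have e1 : ∀ t : ℝ, psi3 (c,(t,b)) = (c • ee 0 + b • ee 2) + t • ee 1 := by
      intro t; rw [psi3_apply]; all_goals module
    simp only [hF, hD, e1]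
    exact key 1 _ a
  have k2 : ∀ c a b : ℝ, F (c,(a,b)) ^ (2:ℕ) ≤ ∫⁻ t : ℝ, F (c,(a,t)) * D 2 (c,(a,t)) := by
    intro c a b
    have e1 : ∀ t : ℝ, psi3 (c,(a,t)) = (c • ee 0 + a • ee 1) + t • ee 2 := by
      intro t; rw [psi3_apply]; all_goals module
    simp only [hF, hD, e1]
    exact key 2 _ b
  have k3 : ∀ c a b : ℝ, F (c,(a,b)) ^ (2:ℕ) ≤ ∫⁻ t : ℝ, F (t,(a,b)) * D 0 (t,(a,b)) := by
    intro c a b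
    have e1 : ∀ t : ℝ, psi3 (t,(a,b)) = (a • ee 1 + b • ee 2) + t • ee 0 := by
      intro t; rw [psi3_apply]; all_goals module
    simp only [hF, hD, e1]
    exact key 0 _ c
  have T := main_chain F (D 1) (D 2) (D 0) hFm (hDm 1) (hDm 2) (hDm 0) k1 k2 k3
  have trans4 : ∫⁻ p, F p ^ (4:ℕ) = ENNReal.ofReal (∫ x, φ x ^ 4) := by
    have h1 : ∫⁻ p, F p ^ (4:ℕ) = ∫⁻ x, (‖φ x‖₊ : ℝ≥0∞) ^ (4:ℕ) :=
      psi3_mp.lintegral_comp (f := fun x => (‖φ x‖₊ : ℝ≥0∞) ^ (4:ℕ))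
        (hφc.measurable.nnnorm.coe_nnreal_ennreal.pow_const 4)
    have hint : Integrable (fun x : E3 => φ x ^ 4) :=
      (hφc.pow 4).integrable_of_hasCompactSupport (hc.comp_left (g := (· ^ 4)) (by norm_num) : HasCompactSupport (fun x => φ x ^ 4))
    rw [h1, ofReal_integral_eq_lintegral_ofReal hint
      (Filter.Eventually.of_forall fun x => by positivity)]
    refine lintegral_congr fun x => ?_
    rw [← enorm_eq_nnnorm, Real.enorm_eq_ofReal_abs, ← ENNReal.ofReal_pow (abs_nonneg _)]
    congr 1
    rw [← abs_pow]
    exact abs_of_nonneg (by positivity)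
  have transFn : ∀ (g : E3 → ℝ), Continuous g → HasCompactSupport g →
      (∫⁻ p, (‖g (psi3 p)‖₊ : ℝ≥0∞) ^ (2:ℕ)) = ENNReal.ofReal (∫ x, g x ^ 2) := by
    intro g hgc hgcs
    have h1 : (∫⁻ p, (‖g (psi3 p)‖₊ : ℝ≥0∞) ^ (2:ℕ)) = ∫⁻ x, (‖g x‖₊ : ℝ≥0∞) ^ (2:ℕ) :=
      psi3_mp.lintegral_comp (f := fun x => (‖g x‖₊ : ℝ≥0∞) ^ (2:ℕ))
        (hgc.measurable.nnnorm.coe_nnreal_ennreal.pow_const 2)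
    have hint : Integrable (fun x : E3 => g x ^ 2) :=
      (hgc.pow 2).integrable_of_hasCompactSupport (hgcs.comp_left (g := (· ^ 2)) (by norm_num) : HasCompactSupport (fun x => g x ^ 2))
    rw [h1, ofReal_integral_eq_lintegral_ofReal hint
      (Filter.Eventually.of_forall fun x => by positivity)]
    refine lintegral_congr fun x => ?_
    rw [← enorm_eq_nnnorm, Real.enorm_eq_ofReal_abs, ← ENNReal.ofReal_pow (abs_nonneg _), sq_abs]
  have t2 : (∫⁻ p, F p ^ (2:ℕ)) = ENNReal.ofReal (∫ x, φ x ^ 2) := transFn φ hφc hc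
  have tD : ∀ i : Fin 3, (∫⁻ p, D i p ^ (2:ℕ)) =
      ENNReal.ofReal (∫ x, (fderiv ℝ φ x (ee i)) ^ 2) :=
    fun i => transFn _ (hdc i) (hdcs i)
  have hI2 : 0 ≤ ∫ x, φ x ^ 2 := integral_nonneg fun x => by positivity
  have ha : ∀ i : Fin 3, 0 ≤ ∫ x, (fderiv ℝ φ x (ee i)) ^ 2 :=
    fun i => integral_nonneg fun x => by positivity
  rw [trans4, t2, tD 1, tD 2, tD 0] at T
  rw [ENNReal.ofReal_rpow_of_nonneg hI2 (by norm_num),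
    ENNReal.ofReal_rpow_of_nonneg (ha 1) (by norm_num),
    ENNReal.ofReal_rpow_of_nonneg (ha 2) (by norm_num),
    ENNReal.ofReal_rpow_of_nonneg (ha 0) (by norm_num),
    ← ENNReal.ofReal_mul (by positivity), ← ENNReal.ofReal_mul (by positivity),
    ← ENNReal.ofReal_mul (by positivity)] at T
  have hreal := (ENNReal.ofReal_le_ofReal_iff (by positivity)).mp T
  calc ∫ x, φ x ^ 4 ≤ (∫ x, φ x ^ 2) ^ ((1:ℝ)/2) * (∫ x, (fderiv ℝ φ x (ee 1)) ^ 2) ^ ((1:ℝ)/2)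
        * (∫ x, (fderiv ℝ φ x (ee 2)) ^ 2) ^ ((1:ℝ)/2)
        * (∫ x, (fderiv ℝ φ x (ee 0)) ^ 2) ^ ((1:ℝ)/2) := hreal
    _ = _ := by ring

/-! ### dual norm estimate -/

set_option linter.unusedTactic false in
set_option linter.unreachableTactic false in
lemma sum_sq_apply_le (g : E3 →L[ℝ] ℝ) :
    (g (ee 0))^2 + (g (ee 1))^2 + (g (ee 2))^2 ≤ ‖g‖^2 := by
  set w : E3 := g (ee 0) • ee 0 + g (ee 1) • ee 1 + g (ee 2) • ee 2 with hw
  have hgw : g w = (g (ee 0))^2 + (g (ee 1))^2 + (g (ee 2))^2 := by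
    simp [hw, _root_.map_add, _root_.map_smul, smul_eq_mul]; ring
  have hwj : ∀ j : Fin 3, w j = g (ee j) := by
    intro j
    fin_cases j <;>
      simp [hw, ee, PiLp.add_apply, PiLp.smul_apply, EuclideanSpace.single_apply,
        smul_eq_mul] <;> norm_num
  have hnw : ‖w‖^2 = (g (ee 0))^2 + (g (ee 1))^2 + (g (ee 2))^2 := by
    rw [EuclideanSpace.norm_eq]
    rw [Real.sq_sqrt (by positivity)]
    rw [Fin.sum_univ_three]
    simp [hwj, Real.norm_eq_abs, sq_abs]
  have hle : g w ≤ ‖g‖ * ‖w‖ := le_trans (le_abs_self _) (g.le_opNorm w)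
  rcases eq_or_lt_of_le (norm_nonneg w) with h0 | h0
  · rw [← hnw, ← h0]
    simp only [ne_eq, OfNat.ofNat_ne_zero, not_false_eq_true, zero_pow]
    exact sq_nonneg _
  · have h1 : ‖w‖^2 ≤ ‖g‖ * ‖w‖ := by rw [hnw, ← hgw] at *; exact hgw ▸ hle
    have h2 : ‖w‖ ≤ ‖g‖ := by
      have := le_of_mul_le_mul_right (by nlinarith : ‖w‖ * ‖w‖ ≤ ‖g‖ * ‖w‖) h0
      exact this
    calc (g (ee 0))^2 + (g (ee 1))^2 + (g (ee 2))^2 = ‖w‖^2 := hnw.symm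
      _ ≤ ‖g‖^2 := by nlinarith [norm_nonneg w]

/-! ### regularized norm -/

variable {u : E3 → E3} {ε : ℝ}

def phiE (u : E3 → E3) (ε : ℝ) : E3 → ℝ := fun x => Real.sqrt (‖u x‖^2 + ε^2) - ε

lemma phiE_nonneg (hε : 0 < ε) (x : E3) : 0 ≤ phiE u ε x := by
  have : ε ≤ Real.sqrt (‖u x‖^2 + ε^2) := by
    rw [show ε = Real.sqrt (ε^2) from (Real.sqrt_sq hε.le).symm]
    exact Real.sqrt_le_sqrt (by nlinarith [sq_nonneg (‖u x‖), Real.sq_sqrt (sq_nonneg ε)])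
  simpa [phiE] using this

lemma phiE_le (hε : 0 < ε) (x : E3) : phiE u ε x ≤ ‖u x‖ := by
  have h1 : Real.sqrt (‖u x‖^2 + ε^2) ≤ ‖u x‖ + ε := by
    rw [show ‖u x‖ + ε = Real.sqrt ((‖u x‖ + ε)^2) from
      (Real.sqrt_sq (by positivity)).symm]
    exact Real.sqrt_le_sqrt (by nlinarith [norm_nonneg (u x), hε.le])
  simp only [phiE]; linarith

lemma phiE_lower (hε : 0 < ε) (x : E3) : ‖u x‖ - ε ≤ phiE u ε x := by
  have h1 : Real.sqrt (‖u x‖^2) ≤ Real.sqrt (‖u x‖^2 + ε^2) :=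
    Real.sqrt_le_sqrt (by nlinarith)
  rw [Real.sqrt_sq (norm_nonneg _)] at h1
  simp only [phiE]; linarith

lemma phiE_contDiff (hu : ContDiff ℝ (⊤ : ℕ∞) u) (hε : 0 < ε) : ContDiff ℝ 1 (phiE u ε) := by
  have hq : ContDiff ℝ 1 (fun x => ‖u x‖^2 + ε^2) :=
    ((hu.of_le (by simp)).norm_sq ℝ).add contDiff_const
  have : ContDiff ℝ 1 (fun x => Real.sqrt (‖u x‖^2 + ε^2)) := by
    rw [contDiff_iff_contDiffAt]
    intro x
    exact (hq.contDiffAt).sqrt (by positivity)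
  exact this.sub contDiff_const

lemma phiE_cs (hsupp : HasCompactSupport u) (hε : 0 < ε) :
    HasCompactSupport (phiE u ε) := by
  apply hsupp.mono'
  intro x hx
  apply subset_tsupport
  intro hx0
  apply hx
  simp only [phiE, Function.mem_support, ne_eq, not_not] at *
  rw [hx0]
  simp [Real.sqrt_sq hε.le]

lemma phiE_deriv (hu : ContDiff ℝ (⊤ : ℕ∞) u) (hε : 0 < ε) (x : E3) :
    HasFDerivAt (phiE u ε)
      ((1 / (2 * Real.sqrt (⟪u x, u x⟫ + ε^2))) •
        ((fderivInnerCLM ℝ (u x, u x)).comp ((fderiv ℝ u x).prod (fderiv ℝ u x)))) x := by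
  have hux : HasFDerivAt u (fderiv ℝ u x) x := (hu.differentiable (by simp) x).hasFDerivAt
  have hq : HasFDerivAt (fun y => (⟪u y, u y⟫ : ℝ) + ε^2)
      ((fderivInnerCLM ℝ (u x, u x)).comp ((fderiv ℝ u x).prod (fderiv ℝ u x))) x :=
    (hux.inner ℝ hux).add_const _
  have hpos : (⟪u x, u x⟫ : ℝ) + ε^2 ≠ 0 := by
    have := real_inner_self_nonneg (x := u x); positivity
  have hs := hq.sqrt hpos
  have : phiE u ε = fun y => Real.sqrt ((⟪u y, u y⟫ : ℝ) + ε^2) - ε := by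
    funext y
    show Real.sqrt (‖u y‖^2 + ε^2) - ε = Real.sqrt ((⟪u y, u y⟫ : ℝ) + ε^2) - ε
    rw [real_inner_self_eq_norm_sq]
  rw [this]
  exact hs.sub_const ε

lemma phiE_grad_bound (hu : ContDiff ℝ (⊤ : ℕ∞) u) (hε : 0 < ε) (x : E3) :
    (fderiv ℝ (phiE u ε) x (ee 0))^2 + (fderiv ℝ (phiE u ε) x (ee 1))^2
      + (fderiv ℝ (phiE u ε) x (ee 2))^2 ≤ ‖fderiv ℝ u x‖^2 := by
  have hD := (phiE_deriv hu hε x).fderiv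
  set q : ℝ := (⟪u x, u x⟫ : ℝ) + ε^2 with hqdef
  have hq0 : 0 < q := by
    have := real_inner_self_nonneg (x := u x); positivity
  have hsq : 0 < Real.sqrt q := Real.sqrt_pos.mpr hq0
  set g : E3 →L[ℝ] ℝ := (innerSL ℝ (u x)).comp (fderiv ℝ u x) with hgdef
  have happ : ∀ i : Fin 3, fderiv ℝ (phiE u ε) x (ee i) = (Real.sqrt q)⁻¹ * g (ee i) := by
    intro i
    rw [hD]
    simp only [ContinuousLinearMap.smul_apply, ContinuousLinearMap.comp_apply,
      ContinuousLinearMap.prod_apply, fderivInnerCLM_apply, smul_eq_mul, hgdef,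
      innerSL_apply_apply]
    field_simp
    have hcomm : ∑ j : Fin 3, (fderiv ℝ u x) (ee i) j * u x j
        = ∑ j : Fin 3, u x j * (fderiv ℝ u x) (ee i) j := by
      apply Finset.sum_congr rfl; intros; ring
    rw [real_inner_comm (u x)]; ring
  have hgnorm : ‖g‖ ≤ ‖u x‖ * ‖fderiv ℝ u x‖ := by
    calc ‖g‖ ≤ ‖innerSL ℝ (u x)‖ * ‖fderiv ℝ u x‖ := ContinuousLinearMap.opNorm_comp_le _ _
      _ = ‖u x‖ * ‖fderiv ℝ u x‖ := by rw [innerSL_apply_norm]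
  have hsum := sum_sq_apply_le g
  have hkey : (g (ee 0))^2 + (g (ee 1))^2 + (g (ee 2))^2 ≤ (‖u x‖ * ‖fderiv ℝ u x‖)^2 := by
    refine hsum.trans ?_
    have h1 : (0:ℝ) ≤ ‖u x‖ * ‖fderiv ℝ u x‖ := by positivity
    nlinarith [norm_nonneg g]
  have hq1 : ‖u x‖^2 ≤ q := by
    rw [hqdef, real_inner_self_eq_norm_sq]; nlinarith
  have hsqinv : (Real.sqrt q)⁻¹^2 = q⁻¹ := by
    rw [inv_pow, Real.sq_sqrt hq0.le]
  calc (fderiv ℝ (phiE u ε) x (ee 0))^2 + (fderiv ℝ (phiE u ε) x (ee 1))^2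
      + (fderiv ℝ (phiE u ε) x (ee 2))^2
      = q⁻¹ * ((g (ee 0))^2 + (g (ee 1))^2 + (g (ee 2))^2) := by
        rw [happ 0, happ 1, happ 2, mul_pow, mul_pow, mul_pow, hsqinv]; ring
    _ ≤ q⁻¹ * ((‖u x‖ * ‖fderiv ℝ u x‖)^2) := by
        apply mul_le_mul_of_nonneg_left hkey (by positivity)
    _ = (‖u x‖^2 / q) * ‖fderiv ℝ u x‖^2 := by ring
    _ ≤ 1 * ‖fderiv ℝ u x‖^2 := by
        apply mul_le_mul_of_nonneg_right _ (sq_nonneg _)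
        rw [div_le_one hq0]
        exact hq1
    _ = ‖fderiv ℝ u x‖^2 := one_mul _

end LadyzhenskayaAux

end LadyzhenskayaAux

open LadyzhenskayaAux in
theorem ladyzhenskaya_3d_L4
    (u : EuclideanSpace ℝ (Fin 3) → EuclideanSpace ℝ (Fin 3))
    (hu : ContDiff ℝ (⊤ : ℕ∞) u) (hsupp : HasCompactSupport u) :
    (∫ x, ‖u x‖ ^ 4) ^ ((1:ℝ)/4) ≤
      (4 / (3 * Real.sqrt 3)) * ((∫ x, ‖u x‖ ^ 2) ^ ((1:ℝ)/2)) ^ ((1:ℝ)/4) *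
        ((∫ x, ‖fderiv ℝ u x‖ ^ 2) ^ ((1:ℝ)/2)) ^ ((3:ℝ)/4) := by
  set I4 := ∫ x, ‖u x‖ ^ 4 with hI4d
  set I2 := ∫ x, ‖u x‖ ^ 2 with hI2d
  set D2 := ∫ x, ‖fderiv ℝ u x‖ ^ 2 with hD2d
  have hucont : Continuous u := hu.continuous
  have hfdcont : Continuous (fderiv ℝ u) := hu.continuous_fderiv (by simp)
  have hint2 : Integrable (fun x : E3 => ‖u x‖ ^ 2) :=
    (hucont.norm.pow 2).integrable_of_hasCompactSupport
      ((hsupp.norm).comp_left (g := (· ^ 2)) (by norm_num) : HasCompactSupport (fun x => ‖u x‖ ^ 2))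
  have hint4 : Integrable (fun x : E3 => ‖u x‖ ^ 4) :=
    (hucont.norm.pow 4).integrable_of_hasCompactSupport
      ((hsupp.norm).comp_left (g := (· ^ 4)) (by norm_num) : HasCompactSupport (fun x => ‖u x‖ ^ 4))
  have hintD2 : Integrable (fun x : E3 => ‖fderiv ℝ u x‖ ^ 2) :=
    (hfdcont.norm.pow 2).integrable_of_hasCompactSupport
      (((hsupp.fderiv (𝕜 := ℝ)).norm).comp_left (g := (· ^ 2)) (by norm_num) :
          HasCompactSupport (fun x => ‖fderiv ℝ u x‖ ^ 2))
  have hI4nn : 0 ≤ I4 := integral_nonneg fun x => by positivity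
  have hI2nn : 0 ≤ I2 := integral_nonneg fun x => by positivity
  have hD2nn : 0 ≤ D2 := integral_nonneg fun x => by positivity
  -- uniform bound
  have bound : ∀ n : ℕ, (∫ x, phiE u (1/(n+1)) x ^ 4) ≤
      I2 ^ ((1:ℝ)/2) * (D2/3) ^ ((3:ℝ)/2) := by
    intro n
    set ε : ℝ := 1/(n+1) with hεd
    have hε : 0 < ε := by positivity
    have h1 := phiE_contDiff hu hε
    have h2 := phiE_cs hsupp hε
    have S := scalar_step h1 h2
    set a : Fin 3 → ℝ := fun i => ∫ x, (fderiv ℝ (phiE u ε) x (ee i)) ^ 2 with had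
    have hdcont : ∀ i : Fin 3, Continuous (fun x => fderiv ℝ (phiE u ε) x (ee i)) := fun i =>
      (h1.continuous_fderiv one_ne_zero).clm_apply continuous_const
    have hdcs : ∀ i : Fin 3, HasCompactSupport (fun x => fderiv ℝ (phiE u ε) x (ee i)) :=
      fun i => (h2.fderiv (𝕜 := ℝ)).comp_left (g := fun L : E3 →L[ℝ] ℝ => L (ee i)) rfl
    have hinta : ∀ i : Fin 3, Integrable (fun x => (fderiv ℝ (phiE u ε) x (ee i)) ^ 2) :=
      fun i => ((hdcont i).pow 2).integrable_of_hasCompactSupport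
        ((hdcs i).comp_left (g := (· ^ 2)) (by norm_num) :
          HasCompactSupport (fun x => (fderiv ℝ (phiE u ε) x (ee i)) ^ 2))
    have hintphi2 : Integrable (fun x => phiE u ε x ^ 2) :=
      (h1.continuous.pow 2).integrable_of_hasCompactSupport
        (h2.comp_left (g := (· ^ 2)) (by norm_num) : HasCompactSupport (fun x => phiE u ε x ^ 2))
    have hphile : (∫ x, phiE u ε x ^ 2) ≤ I2 := by
      refine integral_mono hintphi2 hint2 fun x => ?_
      exact pow_le_pow_left₀ (phiE_nonneg hε x) (phiE_le hε x) 2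
    have hann : ∀ i, 0 ≤ a i := fun i => integral_nonneg fun x => sq_nonneg _
    have hsum : a 0 + a 1 + a 2 ≤ D2 := by
      have e : (∫ x, ((fderiv ℝ (phiE u ε) x (ee 0))^2
          + (fderiv ℝ (phiE u ε) x (ee 1))^2 + (fderiv ℝ (phiE u ε) x (ee 2))^2))
          = a 0 + a 1 + a 2 := by
        have h12 : Integrable (fun x : E3 => (fderiv ℝ (phiE u ε) x (ee 0))^2
            + (fderiv ℝ (phiE u ε) x (ee 1))^2) := (hinta 0).add (hinta 1)
        rw [integral_add h12 (hinta 2), integral_add (hinta 0) (hinta 1)]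
      rw [← e]
      have h123 : Integrable (fun x : E3 => (fderiv ℝ (phiE u ε) x (ee 0))^2
          + (fderiv ℝ (phiE u ε) x (ee 1))^2 + (fderiv ℝ (phiE u ε) x (ee 2))^2) :=
        ((hinta 0).add (hinta 1)).add (hinta 2)
      exact integral_mono h123 hintD2 (fun x => phiE_grad_bound hu hε x)
    have hgm : a 0 ^ ((1:ℝ)/2) * a 1 ^ ((1:ℝ)/2) * a 2 ^ ((1:ℝ)/2) ≤ (D2/3) ^ ((3:ℝ)/2) := by
      have h13 := Real.geom_mean_le_arith_mean3_weighted (by norm_num : (0:ℝ) ≤ 1/3)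
        (by norm_num : (0:ℝ) ≤ 1/3) (by norm_num : (0:ℝ) ≤ 1/3)
        (hann 0) (hann 1) (hann 2) (by norm_num)
      have hD3 : (1:ℝ)/3 * a 0 + 1/3 * a 1 + 1/3 * a 2 ≤ D2/3 := by linarith
      have hprod : a 0 ^ ((1:ℝ)/3) * a 1 ^ ((1:ℝ)/3) * a 2 ^ ((1:ℝ)/3) ≤ D2/3 :=
        le_trans h13 hD3
      calc a 0 ^ ((1:ℝ)/2) * a 1 ^ ((1:ℝ)/2) * a 2 ^ ((1:ℝ)/2)
          = (a 0 ^ ((1:ℝ)/3) * a 1 ^ ((1:ℝ)/3) * a 2 ^ ((1:ℝ)/3)) ^ ((3:ℝ)/2) := by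
            rw [Real.mul_rpow (by positivity) (by positivity),
              Real.mul_rpow (by positivity) (by positivity),
              ← Real.rpow_mul (hann 0), ← Real.rpow_mul (hann 1), ← Real.rpow_mul (hann 2)]
            norm_num
        _ ≤ (D2/3) ^ ((3:ℝ)/2) :=
            Real.rpow_le_rpow (by positivity) hprod (by norm_num)
    calc (∫ x, phiE u ε x ^ 4)
        ≤ (∫ x, phiE u ε x ^ 2) ^ ((1:ℝ)/2)
          * (a 0 ^ ((1:ℝ)/2) * a 1 ^ ((1:ℝ)/2) * a 2 ^ ((1:ℝ)/2)) := S
      _ ≤ I2 ^ ((1:ℝ)/2) * (D2/3) ^ ((3:ℝ)/2) := by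
          apply mul_le_mul _ hgm (by positivity) (by positivity)
          exact Real.rpow_le_rpow (integral_nonneg fun x => by positivity) hphile (by norm_num)
  -- dominated convergence
  have hlim : Filter.Tendsto (fun n : ℕ => ∫ x, phiE u (1/(n+1)) x ^ 4)
      Filter.atTop (𝓝 I4) := by
    apply tendsto_integral_of_dominated_convergence (bound := fun x : E3 => ‖u x‖ ^ 4)
    · intro n
      have hε : (0:ℝ) < 1/(n+1) := by positivity
      exact ((phiE_contDiff hu hε).continuous.pow 4).aestronglyMeasurable
    · exact hint4
    · intro n
      have hε : (0:ℝ) < 1/(n+1) := by positivity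
      filter_upwards with x
      rw [Real.norm_eq_abs, abs_of_nonneg (by positivity)]
      exact pow_le_pow_left₀ (phiE_nonneg hε x) (phiE_le hε x) 4
    · filter_upwards with x
      have hphi : Filter.Tendsto (fun n : ℕ => phiE u (1/(n+1)) x) Filter.atTop (𝓝 ‖u x‖) := by
        apply tendsto_of_tendsto_of_tendsto_of_le_of_le
          (g := fun n : ℕ => ‖u x‖ - 1/(n+1)) (h := fun _ : ℕ => ‖u x‖)
        · simpa using (tendsto_const_nhds :
            Filter.Tendsto (fun _ : ℕ => ‖u x‖) Filter.atTop (𝓝 ‖u x‖)).sub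
              tendsto_one_div_add_atTop_nhds_zero_nat
        · exact tendsto_const_nhds
        · intro n; exact phiE_lower (by positivity) x
        · intro n; exact phiE_le (by positivity) x
      simpa using hphi.pow 4
  have hI4le : I4 ≤ I2 ^ ((1:ℝ)/2) * (D2/3) ^ ((3:ℝ)/2) :=
    le_of_tendsto hlim (Filter.Eventually.of_forall bound)
  -- final arithmetic
  have step1 : I4 ^ ((1:ℝ)/4) ≤ (I2 ^ ((1:ℝ)/2) * (D2/3) ^ ((3:ℝ)/2)) ^ ((1:ℝ)/4) :=
    Real.rpow_le_rpow hI4nn hI4le (by norm_num)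
  have e1 : (I2 ^ ((1:ℝ)/2) * (D2/3) ^ ((3:ℝ)/2)) ^ ((1:ℝ)/4)
      = (I2 ^ ((1:ℝ)/2)) ^ ((1:ℝ)/4) * ((D2/3) ^ ((3:ℝ)/2)) ^ ((1:ℝ)/4) :=
    Real.mul_rpow (by positivity) (by positivity)
  have e2 : ((D2/3) ^ ((3:ℝ)/2)) ^ ((1:ℝ)/4)
      = (D2 ^ ((1:ℝ)/2)) ^ ((3:ℝ)/4) * (3:ℝ) ^ (-(3/8 : ℝ)) := by
    rw [← Real.rpow_mul (by positivity : (0:ℝ) ≤ D2/3),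
      ← Real.rpow_mul hD2nn]
    rw [Real.div_rpow hD2nn (by norm_num : (0:ℝ) ≤ 3)]
    rw [Real.rpow_neg (by norm_num : (0:ℝ) ≤ 3)]
    norm_num
    rw [div_eq_mul_inv]
  have hconst : (3:ℝ) ^ (-(3/8 : ℝ)) ≤ 4 / (3 * Real.sqrt 3) := by
    have hs3 : (0:ℝ) < Real.sqrt 3 := Real.sqrt_pos.mpr (by norm_num)
    have h1 : (0:ℝ) < 3 * Real.sqrt 3 := by positivity
    rw [le_div_iff₀ h1]
    have e3 : (3:ℝ) * Real.sqrt 3 = 3 ^ ((3:ℝ)/2) := by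
      have h32 : (3:ℝ) ^ ((3:ℝ)/2) = 3 ^ (1:ℝ) * 3 ^ ((1:ℝ)/2) := by
        rw [← Real.rpow_add (by norm_num : (0:ℝ) < 3)]; norm_num
      rw [h32, Real.rpow_one, ← Real.sqrt_eq_rpow]
    rw [e3, ← Real.rpow_add (by norm_num : (0:ℝ) < 3)]
    have hexp : (-(3/8 : ℝ)) + (3:ℝ)/2 = 9/8 := by norm_num
    rw [hexp]
    have h9 : (3:ℝ) ^ ((9:ℝ)/8) = ((3:ℝ)^(9:ℕ)) ^ ((1:ℝ)/8) := by
      rw [← Real.rpow_natCast 3 9, ← Real.rpow_mul (by norm_num : (0:ℝ) ≤ 3)]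
      norm_num
    have h4 : (4:ℝ) = ((4:ℝ)^(8:ℕ)) ^ ((1:ℝ)/8) := by
      rw [← Real.rpow_natCast 4 8, ← Real.rpow_mul (by norm_num : (0:ℝ) ≤ 4)]
      norm_num
    rw [h9, h4]
    apply Real.rpow_le_rpow (by positivity) (by norm_num) (by norm_num)
  calc I4 ^ ((1:ℝ)/4)
      ≤ (I2 ^ ((1:ℝ)/2)) ^ ((1:ℝ)/4) * ((D2 ^ ((1:ℝ)/2)) ^ ((3:ℝ)/4) * (3:ℝ) ^ (-(3/8 : ℝ))) := by
        rw [← e2, ← e1]; exact step1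
    _ ≤ (I2 ^ ((1:ℝ)/2)) ^ ((1:ℝ)/4) * ((D2 ^ ((1:ℝ)/2)) ^ ((3:ℝ)/4) * (4 / (3 * Real.sqrt 3))) := by
        apply mul_le_mul_of_nonneg_left _ (by positivity)
        exact mul_le_mul_of_nonneg_left hconst (by positivity)
    _ = 4 / (3 * Real.sqrt 3) * (I2 ^ ((1:ℝ)/2)) ^ ((1:ℝ)/4) * (D2 ^ ((1:ℝ)/2)) ^ ((3:ℝ)/4) := by
        ring
end

section
/- Let u : ℝ² → ℝ² be smooth with compact support. Then for any e : ℝ² → ℝ² smooth with compact support, |∫ (e·∇u)·e dx| ≤ √2 · ‖∇u‖_{L²} · ‖e‖_{L²} · ‖∇e‖_{L²}. -/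
open MeasureTheory Real Set

noncomputable section NLTB

namespace NLTB

abbrev E2 := EuclideanSpace ℝ (Fin 2)

def Lmap : (ℝ × ℝ) ≃L[ℝ] E2 :=
  ((LinearEquiv.finTwoArrow ℝ ℝ).symm.toContinuousLinearEquiv).trans
    (EuclideanSpace.equiv (Fin 2) ℝ).symm

def v1 : E2 := EuclideanSpace.single 0 1
def v2 : E2 := EuclideanSpace.single 1 1

theorem Lmap_mp : MeasurePreserving (⇑Lmap) volume volume := by
  have hF : MeasurePreserving
      ((MeasurableEquiv.finTwoArrow (α := ℝ)).symm.trans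
        (MeasurableEquiv.toLp 2 (Fin 2 → ℝ))) volume volume :=
    ((EuclideanSpace.volume_preserving_symm_measurableEquiv_toLp (Fin 2)).symm).comp
      ((volume_preserving_finTwoArrow ℝ).symm)
  convert hF using 1
  rfl

theorem integral_comp_Lmap (f : E2 → ℝ) : ∫ x, f x = ∫ p, f (Lmap p) :=
  (Lmap_mp.integral_comp (Lmap.toHomeomorph.measurableEmbedding) f).symm

theorem integrable_comp_Lmap {f : E2 → ℝ} (hf : Integrable f) :
    Integrable (fun p => f (Lmap p)) :=
  (Lmap_mp.integrable_comp_emb (Lmap.toHomeomorph.measurableEmbedding)).2 hf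

theorem Lmap_e1 : Lmap (1, 0) = v1 := by
  ext j
  fin_cases j <;> simp [Lmap, v1, LinearEquiv.finTwoArrow, EuclideanSpace.single]

theorem Lmap_e2 : Lmap (0, 1) = v2 := by
  ext j
  fin_cases j <;> simp [Lmap, v2, LinearEquiv.finTwoArrow, EuclideanSpace.single]

theorem v1_norm : ‖v1‖ = 1 := by simp [v1, EuclideanSpace.norm_single]
theorem v2_norm : ‖v2‖ = 1 := by simp [v2, EuclideanSpace.norm_single]
theorem v12_inner : (inner ℝ v1 v2 : ℝ) = 0 := by
  simp [v1, v2, EuclideanSpace.inner_single_left, EuclideanSpace.single_apply]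

/-! ### 1d FTC bound -/

theorem abs_le_integral_abs_deriv (h : ℝ → ℝ) (hh : ContDiff ℝ (⊤ : ℕ∞) h)
    (hs : HasCompactSupport h) (x : ℝ) : |h x| ≤ ∫ t, |deriv h t| := by
  have h1 : ∫ t in Iic x, deriv h t = h x :=
    hs.integral_Iic_deriv_eq (hh.of_le (by simp)) x
  have hint : Integrable (fun t => |deriv h t|) :=
    ((hh.continuous_deriv (by simp)).abs).integrable_of_hasCompactSupport hs.deriv.abs
  calc |h x| = |∫ t in Iic x, deriv h t| := by rw [h1]
    _ ≤ ∫ t in Iic x, |deriv h t| := by simpa using norm_integral_le_integral_norm (deriv h)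
    _ ≤ ∫ t, |deriv h t| := setIntegral_le_integral hint
        (Filter.Eventually.of_forall fun t => abs_nonneg _)

theorem sect_one (G : ℝ × ℝ → ℝ) (hG : ContDiff ℝ (⊤ : ℕ∞) G) (hGs : HasCompactSupport G)
    (x y : ℝ) : |G (x, y)| ≤ ∫ t, |fderiv ℝ G (t, y) (1, 0)| := by
  set h : ℝ → ℝ := fun t => G (t, y) with hh
  have hder : ∀ t, HasDerivAt h (fderiv ℝ G (t, y) (1, 0)) t := by
    intro t
    have h1 : HasDerivAt (fun t : ℝ => (t, y)) ((1:ℝ), (0:ℝ)) t := by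
      simpa using (hasDerivAt_id t).prodMk (hasDerivAt_const t y)
    exact ((hG.differentiable (by simp) (t, y)).hasFDerivAt).comp_hasDerivAt t h1
  have hcd : ContDiff ℝ (⊤ : ℕ∞) h := hG.comp ((contDiff_id (E := ℝ)).prodMk contDiff_const)
  have hcs : HasCompactSupport h := by
    have hK : IsCompact (Prod.fst '' tsupport G) := hGs.image continuous_fst
    refine IsCompact.of_isClosed_subset hK (isClosed_tsupport h) ?_
    refine closure_minimal ?_ (hK.isClosed)
    intro t ht
    exact ⟨(t, y), subset_tsupport G ht, rfl⟩
  have := abs_le_integral_abs_deriv h hcd hcs x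
  have hde : ∀ t, deriv h t = fderiv ℝ G (t, y) (1, 0) := fun t => (hder t).deriv
  simpa [hde] using this

theorem sect_two (G : ℝ × ℝ → ℝ) (hG : ContDiff ℝ (⊤ : ℕ∞) G) (hGs : HasCompactSupport G)
    (x y : ℝ) : |G (x, y)| ≤ ∫ s, |fderiv ℝ G (x, s) (0, 1)| := by
  set h : ℝ → ℝ := fun s => G (x, s) with hh
  have hder : ∀ s, HasDerivAt h (fderiv ℝ G (x, s) (0, 1)) s := by
    intro s
    have h1 : HasDerivAt (fun s : ℝ => (x, s)) ((0:ℝ), (1:ℝ)) s := by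
      simpa using (hasDerivAt_const s x).prodMk (hasDerivAt_id s)
    exact ((hG.differentiable (by simp) (x, s)).hasFDerivAt).comp_hasDerivAt s h1
  have hcd : ContDiff ℝ (⊤ : ℕ∞) h := hG.comp (contDiff_const.prodMk (contDiff_id (E := ℝ)))
  have hcs : HasCompactSupport h := by
    have hK : IsCompact (Prod.snd '' tsupport G) := hGs.image continuous_snd
    refine IsCompact.of_isClosed_subset hK (isClosed_tsupport h) ?_
    refine closure_minimal ?_ (hK.isClosed)
    intro s hs
    exact ⟨(x, s), subset_tsupport G hs, rfl⟩
  have := abs_le_integral_abs_deriv h hcd hcs y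
  have hde : ∀ s, deriv h s = fderiv ℝ G (x, s) (0, 1) := fun s => (hder s).deriv
  simpa [hde] using this

/-! ### 2d Fubini step -/

theorem ladyzh_fubini (G : ℝ × ℝ → ℝ) (hG : ContDiff ℝ (⊤ : ℕ∞) G) (hGs : HasCompactSupport G) :
    ∫ p, (G p) ^ 2 ≤ (∫ p, |fderiv ℝ G p (1, 0)|) * (∫ p, |fderiv ℝ G p (0, 1)|) := by
  have hfderiv_cont : Continuous fun p => fderiv ℝ G p := hG.continuous_fderiv (by simp)
  have hD1c : Continuous fun p => |fderiv ℝ G p (1, 0)| :=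
    ((hfderiv_cont.clm_apply continuous_const)).abs
  have hD2c : Continuous fun p => |fderiv ℝ G p (0, 1)| :=
    ((hfderiv_cont.clm_apply continuous_const)).abs
  have hD1s : HasCompactSupport fun p => |fderiv ℝ G p (1, 0)| := by
    apply HasCompactSupport.abs
    exact (hGs.fderiv ℝ).comp_left (g := fun L : (ℝ × ℝ) →L[ℝ] ℝ => L (1, 0)) rfl
  have hD2s : HasCompactSupport fun p => |fderiv ℝ G p (0, 1)| := by
    apply HasCompactSupport.abs
    exact (hGs.fderiv ℝ).comp_left (g := fun L : (ℝ × ℝ) →L[ℝ] ℝ => L (0, 1)) rfl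
  have hD1i : Integrable (fun p => |fderiv ℝ G p (1, 0)|) :=
    hD1c.integrable_of_hasCompactSupport hD1s
  have hD2i : Integrable (fun p => |fderiv ℝ G p (0, 1)|) :=
    hD2c.integrable_of_hasCompactSupport hD2s
  set A : ℝ → ℝ := fun y => ∫ t, |fderiv ℝ G (t, y) (1, 0)| with hA
  set B : ℝ → ℝ := fun x => ∫ s, |fderiv ℝ G (x, s) (0, 1)| with hB
  have hD1i' : Integrable (fun p => |fderiv ℝ G p (1, 0)|) (volume.prod volume) := by
    rwa [← Measure.volume_eq_prod]
  have hD2i' : Integrable (fun p => |fderiv ℝ G p (0, 1)|) (volume.prod volume) := by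
    rwa [← Measure.volume_eq_prod]
  have hAint : Integrable A := by
    have := hD1i'.integral_prod_right
    simpa [hA] using this
  have hBint : Integrable B := by
    have := hD2i'.integral_prod_left
    simpa [hB] using this
  have hA0 : ∀ y, 0 ≤ A y := fun y => integral_nonneg fun t => abs_nonneg _
  have hB0 : ∀ x, 0 ≤ B x := fun x => integral_nonneg fun s => abs_nonneg _
  have hpt : ∀ p : ℝ × ℝ, (G p) ^ 2 ≤ B p.1 * A p.2 := by
    rintro ⟨x, y⟩
    have h1 := sect_one G hG hGs x y
    have h2 := sect_two G hG hGs x y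
    have : (G (x, y)) ^ 2 = |G (x, y)| * |G (x, y)| := by
      rw [← abs_mul, abs_of_nonneg (mul_self_nonneg _), sq]
    rw [this]
    exact mul_le_mul h2 h1 (abs_nonneg _) (hB0 x)
  have hGi : Integrable (fun p => (G p) ^ 2) := by
    have : Continuous fun p => (G p) ^ 2 := (hG.continuous).pow 2
    apply this.integrable_of_hasCompactSupport
    exact hGs.comp_left (g := fun t : ℝ => t ^ 2) (by simp)
  have hprod : Integrable (fun p : ℝ × ℝ => B p.1 * A p.2) := by
    rw [Measure.volume_eq_prod]
    exact hBint.mul_prod hAint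
  calc ∫ p, (G p) ^ 2 ≤ ∫ p : ℝ × ℝ, B p.1 * A p.2 := integral_mono hGi hprod hpt
    _ = (∫ x, B x) * (∫ y, A y) := by
        rw [Measure.volume_eq_prod]; exact integral_prod_mul B A
    _ = (∫ p, |fderiv ℝ G p (1, 0)|) * (∫ p, |fderiv ℝ G p (0, 1)|) := by
        rw [mul_comm]
        congr 1
        · calc ∫ y, A y = ∫ x, ∫ y, |fderiv ℝ G (x, y) (1, 0)| :=
                (integral_integral_swap (by exact hD1i')).symm
            _ = ∫ p, |fderiv ℝ G p (1, 0)| := by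
                rw [Measure.volume_eq_prod]
                exact (integral_prod _ hD1i').symm
        · calc ∫ x, B x = ∫ x, ∫ s, |fderiv ℝ G (x, s) (0, 1)| := rfl
            _ = ∫ p, |fderiv ℝ G p (0, 1)| := by
                rw [Measure.volume_eq_prod]
                exact (integral_prod _ hD2i').symm

/-! ### Cauchy-Schwarz -/

theorem cs_int {α : Type*} [MeasurableSpace α] {μ : Measure α} {f g : α → ℝ}
    (hf0 : ∀ x, 0 ≤ f x) (hg0 : ∀ x, 0 ≤ g x)
    (hfm : AEStronglyMeasurable f μ) (hgm : AEStronglyMeasurable g μ)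
    (hf2 : Integrable (fun x => f x ^ 2) μ) (hg2 : Integrable (fun x => g x ^ 2) μ) :
    ∫ x, f x * g x ∂μ ≤ Real.sqrt (∫ x, f x ^ 2 ∂μ) * Real.sqrt (∫ x, g x ^ 2 ∂μ) := by
  have hpq : Real.HolderConjugate 2 2 := Real.HolderConjugate.two_two
  have hfL : MemLp f (ENNReal.ofReal 2) μ := by
    rw [show ENNReal.ofReal 2 = 2 by norm_num]
    exact (memLp_two_iff_integrable_sq hfm).2 hf2
  have hgL : MemLp g (ENNReal.ofReal 2) μ := by
    rw [show ENNReal.ofReal 2 = 2 by norm_num]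
    exact (memLp_two_iff_integrable_sq hgm).2 hg2
  have h := integral_mul_le_Lp_mul_Lq_of_nonneg hpq
    (Filter.Eventually.of_forall hf0) (Filter.Eventually.of_forall hg0) hfL hgL
  have hr : ∀ (y : ℝ), y ^ (2:ℝ) = y ^ 2 := fun y => by
    rw [show (2:ℝ) = ((2:ℕ):ℝ) by norm_num, Real.rpow_natCast]
  simp_rw [hr] at h
  rw [Real.sqrt_eq_rpow, Real.sqrt_eq_rpow]
  exact h

/-! ### pointwise lemma -/

theorem ptwise (A : E2 →L[ℝ] E2) (w : E2) :
    |inner ℝ (A v1) w| + |inner ℝ (A v2) w| ≤ Real.sqrt 2 * (‖A‖ * ‖w‖) := by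
  set a : ℝ := inner ℝ (A v1) w with ha
  set b : ℝ := inner ℝ (A v2) w with hb
  have key : Real.sqrt (a ^ 2 + b ^ 2) ≤ ‖A‖ * ‖w‖ := by
    have hsq : ‖a • v1 + b • v2‖ ^ 2 = a ^ 2 + b ^ 2 := by
      rw [norm_add_sq_real, real_inner_smul_left, real_inner_smul_right, v12_inner,
        norm_smul, norm_smul, v1_norm, v2_norm]
      simp [mul_pow, sq_abs]
    have hnorm : ‖a • v1 + b • v2‖ = Real.sqrt (a ^ 2 + b ^ 2) := by
      rw [← hsq, Real.sqrt_sq (norm_nonneg _)]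
    have hinner : (inner ℝ (A (a • v1 + b • v2)) w : ℝ) = a ^ 2 + b ^ 2 := by
      rw [map_add, A.map_smul, A.map_smul, inner_add_left, real_inner_smul_left,
        real_inner_smul_left, ← ha, ← hb]
      ring
    have h1 : a ^ 2 + b ^ 2 ≤ ‖A‖ * ‖w‖ * Real.sqrt (a ^ 2 + b ^ 2) := by
      calc a ^ 2 + b ^ 2 = inner ℝ (A (a • v1 + b • v2)) w := hinner.symm
        _ ≤ ‖A (a • v1 + b • v2)‖ * ‖w‖ := real_inner_le_norm _ _
        _ ≤ ‖A‖ * ‖a • v1 + b • v2‖ * ‖w‖ :=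
            mul_le_mul_of_nonneg_right (A.le_opNorm _) (norm_nonneg _)
        _ = ‖A‖ * ‖w‖ * Real.sqrt (a ^ 2 + b ^ 2) := by rw [hnorm]; ring
    rcases eq_or_lt_of_le (Real.sqrt_nonneg (a ^ 2 + b ^ 2)) with h | h
    · rw [← h]; positivity
    · have := Real.sq_sqrt (by positivity : (0:ℝ) ≤ a ^ 2 + b ^ 2)
      nlinarith [Real.sqrt_nonneg (a ^ 2 + b ^ 2)]
  have habs : |a| + |b| ≤ Real.sqrt 2 * Real.sqrt (a ^ 2 + b ^ 2) := by
    rw [← Real.sqrt_mul_self (by positivity : (0:ℝ) ≤ |a| + |b|), ← Real.sqrt_mul (by norm_num)]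
    apply Real.sqrt_le_sqrt
    nlinarith [sq_nonneg (|a| - |b|), abs_nonneg a, abs_nonneg b, sq_abs a, sq_abs b]
  calc |a| + |b| ≤ Real.sqrt 2 * Real.sqrt (a ^ 2 + b ^ 2) := habs
    _ ≤ Real.sqrt 2 * (‖A‖ * ‖w‖) := mul_le_mul_of_nonneg_left key (Real.sqrt_nonneg 2)

/-! ### derivative of squared norm -/

theorem fderiv_normsq_apply (e : E2 → E2) (he : ContDiff ℝ (⊤ : ℕ∞) e) (x : E2) (v : E2) :
    fderiv ℝ (fun y => ‖e y‖ ^ 2) x v = 2 * inner ℝ (fderiv ℝ e x v) (e x) := by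
  have hd : HasFDerivAt e (fderiv ℝ e x) x := (he.differentiable (by simp) x).hasFDerivAt
  have h := (HasFDerivAt.inner ℝ hd hd)
  have h2 : fderiv ℝ (fun y => (inner ℝ (e y) (e y) : ℝ)) x =
      (fderivInnerCLM ℝ (e x, e x)).comp ((fderiv ℝ e x).prod (fderiv ℝ e x)) := h.fderiv
  have h3 : (fun y => ‖e y‖ ^ 2) = fun y => (inner ℝ (e y) (e y) : ℝ) := by
    funext y; rw [real_inner_self_eq_norm_sq]
  rw [h3, h2]
  simp [fderivInnerCLM_apply, real_inner_comm]
  ring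

/-! ### Ladyzhenskaya -/

theorem ladyzhenskaya (e : E2 → E2) (he : ContDiff ℝ (⊤ : ℕ∞) e) (hesupp : HasCompactSupport e) :
    ∫ x, (‖e x‖ ^ 2) ^ 2 ≤
      2 * ((∫ x, ‖fderiv ℝ e x‖ ^ 2) * (∫ x, ‖e x‖ ^ 2)) := by
  set g : E2 → ℝ := fun x => ‖e x‖ ^ 2 with hgdef
  have hg : ContDiff ℝ (⊤ : ℕ∞) g := ContDiff.norm_sq ℝ he
  have hgs : HasCompactSupport g := by
    apply hesupp.mono (f' := g)
    intro x hx
    simp only [hgdef, Function.mem_support] at hx ⊢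
    intro h0
    exact hx (by simp [h0])
  set G : ℝ × ℝ → ℝ := fun p => g (Lmap p) with hGdef
  have hLclm : ContDiff ℝ (⊤ : ℕ∞) fun p : ℝ × ℝ => Lmap p :=
    (Lmap.toContinuousLinearMap).contDiff
  have hG : ContDiff ℝ (⊤ : ℕ∞) G := hg.comp hLclm
  have hGs : HasCompactSupport G := hgs.comp_homeomorph Lmap.toHomeomorph
  -- derivative of G
  have hfderivG : ∀ (p : ℝ × ℝ) (v : ℝ × ℝ),
      fderiv ℝ G p v = fderiv ℝ g (Lmap p) (Lmap v) := by
    intro p v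
    have hchain : HasFDerivAt G ((fderiv ℝ g (Lmap p)).comp Lmap.toContinuousLinearMap) p :=
      ((hg.differentiable (by simp) (Lmap p)).hasFDerivAt).comp p
        (Lmap.toContinuousLinearMap.hasFDerivAt)
    rw [hchain.fderiv]
    rfl
  have hDe_cont : Continuous fun x => fderiv ℝ e x := he.continuous_fderiv (by simp)
  have hDe_cs : HasCompactSupport fun x => fderiv ℝ e x := hesupp.fderiv ℝ
  -- norms and integrability on E2
  have hne_cont : Continuous fun x => ‖fderiv ℝ e x‖ * ‖e x‖ :=
    hDe_cont.norm.mul he.continuous.norm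
  have hne_cs : HasCompactSupport fun x => ‖fderiv ℝ e x‖ * ‖e x‖ := by
    apply hesupp.mono (f' := fun x => ‖fderiv ℝ e x‖ * ‖e x‖)
    intro x hx
    simp only [Function.mem_support] at hx ⊢
    intro h0
    exact hx (by simp [h0])
  have hne_int : Integrable (fun x => ‖fderiv ℝ e x‖ * ‖e x‖) :=
    hne_cont.integrable_of_hasCompactSupport hne_cs
  -- step 1: Fubini
  have step1 := ladyzh_fubini G hG hGs
  -- step 2: pointwise bound on |D1 G| + |D2 G|
  have hpt : ∀ p : ℝ × ℝ, |fderiv ℝ G p (1, 0)| + |fderiv ℝ G p (0, 1)| ≤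
      2 * Real.sqrt 2 * (‖fderiv ℝ e (Lmap p)‖ * ‖e (Lmap p)‖) := by
    intro p
    rw [hfderivG p (1, 0), hfderivG p (0, 1), Lmap_e1, Lmap_e2,
      fderiv_normsq_apply e he _ v1, fderiv_normsq_apply e he _ v2]
    have := ptwise (fderiv ℝ e (Lmap p)) (e (Lmap p))
    calc |2 * inner ℝ (fderiv ℝ e (Lmap p) v1) (e (Lmap p))| +
          |2 * inner ℝ (fderiv ℝ e (Lmap p) v2) (e (Lmap p))|
        = 2 * (|inner ℝ (fderiv ℝ e (Lmap p) v1) (e (Lmap p))| +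
            |inner ℝ (fderiv ℝ e (Lmap p) v2) (e (Lmap p))|) := by
          rw [abs_mul, abs_mul]; norm_num; ring
      _ ≤ 2 * (Real.sqrt 2 * (‖fderiv ℝ e (Lmap p)‖ * ‖e (Lmap p)‖)) := by
          apply mul_le_mul_of_nonneg_left this (by norm_num)
      _ = 2 * Real.sqrt 2 * (‖fderiv ℝ e (Lmap p)‖ * ‖e (Lmap p)‖) := by ring
  -- integrabilities for D1 D2
  have hfderivG_cont : Continuous fun p => fderiv ℝ G p := hG.continuous_fderiv (by simp)
  have hD1i : Integrable (fun p => |fderiv ℝ G p (1, 0)|) := by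
    apply ((hfderivG_cont.clm_apply continuous_const).abs).integrable_of_hasCompactSupport
    apply HasCompactSupport.abs
    exact (hGs.fderiv ℝ).comp_left (g := fun L : (ℝ × ℝ) →L[ℝ] ℝ => L (1, 0)) rfl
  have hD2i : Integrable (fun p => |fderiv ℝ G p (0, 1)|) := by
    apply ((hfderivG_cont.clm_apply continuous_const).abs).integrable_of_hasCompactSupport
    apply HasCompactSupport.abs
    exact (hGs.fderiv ℝ).comp_left (g := fun L : (ℝ × ℝ) →L[ℝ] ℝ => L (0, 1)) rfl
  -- step 3: integral bound
  have step3 : (∫ p, |fderiv ℝ G p (1, 0)|) + (∫ p, |fderiv ℝ G p (0, 1)|) ≤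
      2 * Real.sqrt 2 * ∫ x, ‖fderiv ℝ e x‖ * ‖e x‖ := by
    rw [← integral_add hD1i hD2i]
    have hrhs : Integrable (fun p => 2 * Real.sqrt 2 *
        (‖fderiv ℝ e (Lmap p)‖ * ‖e (Lmap p)‖)) :=
      (integrable_comp_Lmap hne_int).const_mul _
    calc ∫ p, (|fderiv ℝ G p (1, 0)| + |fderiv ℝ G p (0, 1)|)
        ≤ ∫ p, 2 * Real.sqrt 2 * (‖fderiv ℝ e (Lmap p)‖ * ‖e (Lmap p)‖) :=
          integral_mono (hD1i.add hD2i) hrhs hpt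
      _ = 2 * Real.sqrt 2 * ∫ p, ‖fderiv ℝ e (Lmap p)‖ * ‖e (Lmap p)‖ := by
          rw [integral_const_mul]
      _ = 2 * Real.sqrt 2 * ∫ x, ‖fderiv ℝ e x‖ * ‖e x‖ := by
          rw [← integral_comp_Lmap (fun x => ‖fderiv ℝ e x‖ * ‖e x‖)]
  -- step 4: Cauchy-Schwarz for ∫ ‖De‖ ‖e‖
  have hDe2_int : Integrable (fun x => ‖fderiv ℝ e x‖ ^ 2) := by
    apply (hDe_cont.norm.pow 2).integrable_of_hasCompactSupport
    exact (by simpa only [Pi.pow_def, Function.comp_def] using (hDe_cs.norm).comp_left (g := fun t : ℝ => t ^ 2) (by simp))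
  have he2_int : Integrable (fun x => ‖e x‖ ^ 2) := by
    apply (he.continuous.norm.pow 2).integrable_of_hasCompactSupport
    exact (by simpa only [Pi.pow_def, Function.comp_def] using (hesupp.norm).comp_left (g := fun t : ℝ => t ^ 2) (by simp))
  have step4 : ∫ x, ‖fderiv ℝ e x‖ * ‖e x‖ ≤
      Real.sqrt (∫ x, ‖fderiv ℝ e x‖ ^ 2) * Real.sqrt (∫ x, ‖e x‖ ^ 2) :=
    cs_int (fun x => norm_nonneg _) (fun x => norm_nonneg _)
      hDe_cont.norm.aestronglyMeasurable he.continuous.norm.aestronglyMeasurable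
      hDe2_int he2_int
  -- combine
  have hI1 : (0:ℝ) ≤ ∫ p, |fderiv ℝ G p (1, 0)| := integral_nonneg fun p => abs_nonneg _
  have hI2 : (0:ℝ) ≤ ∫ p, |fderiv ℝ G p (0, 1)| := integral_nonneg fun p => abs_nonneg _
  have hK0 : (0:ℝ) ≤ ∫ x, ‖fderiv ℝ e x‖ * ‖e x‖ :=
    integral_nonneg fun x => mul_nonneg (norm_nonneg _) (norm_nonneg _)
  have hGg : ∫ x, (‖e x‖ ^ 2) ^ 2 = ∫ p, (G p) ^ 2 :=
    integral_comp_Lmap (fun x => (g x) ^ 2)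
  have hDesqrt : (0:ℝ) ≤ Real.sqrt (∫ x, ‖fderiv ℝ e x‖ ^ 2) := Real.sqrt_nonneg _
  have hesqrt : (0:ℝ) ≤ Real.sqrt (∫ x, ‖e x‖ ^ 2) := Real.sqrt_nonneg _
  have hDe2_0 : (0:ℝ) ≤ ∫ x, ‖fderiv ℝ e x‖ ^ 2 := integral_nonneg fun x => sq_nonneg _
  have he2_0 : (0:ℝ) ≤ ∫ x, ‖e x‖ ^ 2 := integral_nonneg fun x => sq_nonneg _
  calc ∫ x, (‖e x‖ ^ 2) ^ 2 = ∫ p, (G p) ^ 2 := hGg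
    _ ≤ (∫ p, |fderiv ℝ G p (1, 0)|) * (∫ p, |fderiv ℝ G p (0, 1)|) := step1
    _ ≤ ((∫ p, |fderiv ℝ G p (1, 0)|) + (∫ p, |fderiv ℝ G p (0, 1)|)) ^ 2 / 4 := by
        nlinarith [sq_nonneg ((∫ p, |fderiv ℝ G p (1, 0)|) - (∫ p, |fderiv ℝ G p (0, 1)|))]
    _ ≤ (2 * Real.sqrt 2 * ∫ x, ‖fderiv ℝ e x‖ * ‖e x‖) ^ 2 / 4 := by
        apply div_le_div_of_nonneg_right ?_ (by norm_num)
        · exact pow_le_pow_left₀ (by linarith) step3 2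
    _ ≤ (2 * Real.sqrt 2 *
          (Real.sqrt (∫ x, ‖fderiv ℝ e x‖ ^ 2) * Real.sqrt (∫ x, ‖e x‖ ^ 2))) ^ 2 / 4 := by
        apply div_le_div_of_nonneg_right ?_ (by norm_num)
        · apply pow_le_pow_left₀ (by positivity)
          exact mul_le_mul_of_nonneg_left step4 (by positivity)
    _ = 2 * ((∫ x, ‖fderiv ℝ e x‖ ^ 2) * (∫ x, ‖e x‖ ^ 2)) := by
        have h2 : Real.sqrt 2 ^ 2 = 2 := Real.sq_sqrt (by norm_num)
        have hA : Real.sqrt (∫ x, ‖fderiv ℝ e x‖ ^ 2) ^ 2 = ∫ x, ‖fderiv ℝ e x‖ ^ 2 :=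
          Real.sq_sqrt hDe2_0
        have hB : Real.sqrt (∫ x, ‖e x‖ ^ 2) ^ 2 = ∫ x, ‖e x‖ ^ 2 := Real.sq_sqrt he2_0
        field_simp [mul_pow]
        rw [h2, hA, hB]; ring

end NLTB
end NLTB

open NLTB in
theorem nonlinear_term_bound_2d
    (u e : EuclideanSpace ℝ (Fin 2) → EuclideanSpace ℝ (Fin 2))
    (hu : ContDiff ℝ (⊤ : ℕ∞) u) (husupp : HasCompactSupport u)
    (he : ContDiff ℝ (⊤ : ℕ∞) e) (hesupp : HasCompactSupport e) :
    |∫ x, inner ℝ (fderiv ℝ u x (e x)) (e x)| ≤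
      Real.sqrt 2 * Real.sqrt (∫ x, ‖fderiv ℝ u x‖ ^ 2) *
        Real.sqrt (∫ x, ‖e x‖ ^ 2) * Real.sqrt (∫ x, ‖fderiv ℝ e x‖ ^ 2) := by
  have hDu_cont : Continuous fun x => fderiv ℝ u x := hu.continuous_fderiv (by simp)
  have hDu_cs : HasCompactSupport fun x => fderiv ℝ u x := husupp.fderiv ℝ
  have hf_cont : Continuous fun x => (inner ℝ (fderiv ℝ u x (e x)) (e x) : ℝ) :=
    (hDu_cont.clm_apply he.continuous).inner he.continuous
  have hf_cs : HasCompactSupport fun x => (inner ℝ (fderiv ℝ u x (e x)) (e x) : ℝ) := by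
    apply hesupp.mono
    intro x hx
    simp only [Function.mem_support] at hx ⊢
    intro h0
    exact hx (by simp [h0])
  have hf_int : Integrable (fun x => (inner ℝ (fderiv ℝ u x (e x)) (e x) : ℝ)) :=
    hf_cont.integrable_of_hasCompactSupport hf_cs
  have hg_cont : Continuous fun x => ‖fderiv ℝ u x‖ * ‖e x‖ ^ 2 :=
    hDu_cont.norm.mul (he.continuous.norm.pow 2)
  have hg_cs : HasCompactSupport fun x => ‖fderiv ℝ u x‖ * ‖e x‖ ^ 2 := by
    apply hesupp.mono
    intro x hx
    simp only [Function.mem_support] at hx ⊢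
    intro h0
    exact hx (by simp [h0])
  have hg_int : Integrable (fun x => ‖fderiv ℝ u x‖ * ‖e x‖ ^ 2) :=
    hg_cont.integrable_of_hasCompactSupport hg_cs
  -- Hölder step: |∫ ⟪Du e, e⟫| ≤ ∫ ‖Du‖ ‖e‖²
  have step1 : |∫ x, (inner ℝ (fderiv ℝ u x (e x)) (e x) : ℝ)| ≤
      ∫ x, ‖fderiv ℝ u x‖ * ‖e x‖ ^ 2 := by
    calc |∫ x, (inner ℝ (fderiv ℝ u x (e x)) (e x) : ℝ)|
        ≤ ∫ x, |(inner ℝ (fderiv ℝ u x (e x)) (e x) : ℝ)| := by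
          simpa [Real.norm_eq_abs] using
            norm_integral_le_integral_norm (fun x => (inner ℝ (fderiv ℝ u x (e x)) (e x) : ℝ))
      _ ≤ ∫ x, ‖fderiv ℝ u x‖ * ‖e x‖ ^ 2 := by
          apply integral_mono hf_int.abs hg_int
          intro x
          calc |(inner ℝ (fderiv ℝ u x (e x)) (e x) : ℝ)|
              ≤ ‖fderiv ℝ u x (e x)‖ * ‖e x‖ := abs_real_inner_le_norm _ _
            _ ≤ ‖fderiv ℝ u x‖ * ‖e x‖ * ‖e x‖ :=
                mul_le_mul_of_nonneg_right ((fderiv ℝ u x).le_opNorm _) (norm_nonneg _)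
            _ = ‖fderiv ℝ u x‖ * ‖e x‖ ^ 2 := by ring
  -- Cauchy-Schwarz: ∫ ‖Du‖ ‖e‖² ≤ √(∫‖Du‖²) √(∫ (‖e‖²)²)
  have hDu2_int : Integrable (fun x => ‖fderiv ℝ u x‖ ^ 2) := by
    apply (hDu_cont.norm.pow 2).integrable_of_hasCompactSupport
    exact (by simpa only [Pi.pow_def, Function.comp_def] using (hDu_cs.norm).comp_left (g := fun t : ℝ => t ^ 2) (by simp))
  have he4_int : Integrable (fun x => (‖e x‖ ^ 2) ^ 2) := by
    apply ((he.continuous.norm.pow 2).pow 2).integrable_of_hasCompactSupport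
    exact (by simpa only [Pi.pow_def, Function.comp_def] using (hesupp.norm).comp_left (g := fun t : ℝ => (t ^ 2) ^ 2) (by simp))
  have step2 : ∫ x, ‖fderiv ℝ u x‖ * ‖e x‖ ^ 2 ≤
      Real.sqrt (∫ x, ‖fderiv ℝ u x‖ ^ 2) * Real.sqrt (∫ x, (‖e x‖ ^ 2) ^ 2) :=
    cs_int (fun x => norm_nonneg _) (fun x => sq_nonneg _)
      hDu_cont.norm.aestronglyMeasurable (he.continuous.norm.pow 2).aestronglyMeasurable
      hDu2_int he4_int
  -- Ladyzhenskaya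
  have hlad := ladyzhenskaya e he hesupp
  have hDe2_0 : (0:ℝ) ≤ ∫ x, ‖fderiv ℝ e x‖ ^ 2 := integral_nonneg fun x => sq_nonneg _
  have he2_0 : (0:ℝ) ≤ ∫ x, ‖e x‖ ^ 2 := integral_nonneg fun x => sq_nonneg _
  have step3 : Real.sqrt (∫ x, (‖e x‖ ^ 2) ^ 2) ≤
      Real.sqrt 2 * (Real.sqrt (∫ x, ‖fderiv ℝ e x‖ ^ 2) * Real.sqrt (∫ x, ‖e x‖ ^ 2)) := by
    calc Real.sqrt (∫ x, (‖e x‖ ^ 2) ^ 2)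
        ≤ Real.sqrt (2 * ((∫ x, ‖fderiv ℝ e x‖ ^ 2) * (∫ x, ‖e x‖ ^ 2))) :=
          Real.sqrt_le_sqrt hlad
      _ = Real.sqrt 2 * (Real.sqrt (∫ x, ‖fderiv ℝ e x‖ ^ 2) * Real.sqrt (∫ x, ‖e x‖ ^ 2)) := by
          rw [Real.sqrt_mul (by norm_num), Real.sqrt_mul hDe2_0]
  calc |∫ x, (inner ℝ (fderiv ℝ u x (e x)) (e x) : ℝ)|
      ≤ ∫ x, ‖fderiv ℝ u x‖ * ‖e x‖ ^ 2 := step1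
    _ ≤ Real.sqrt (∫ x, ‖fderiv ℝ u x‖ ^ 2) * Real.sqrt (∫ x, (‖e x‖ ^ 2) ^ 2) := step2
    _ ≤ Real.sqrt (∫ x, ‖fderiv ℝ u x‖ ^ 2) *
          (Real.sqrt 2 * (Real.sqrt (∫ x, ‖fderiv ℝ e x‖ ^ 2) * Real.sqrt (∫ x, ‖e x‖ ^ 2))) :=
        mul_le_mul_of_nonneg_left step3 (Real.sqrt_nonneg _)
    _ = Real.sqrt 2 * Real.sqrt (∫ x, ‖fderiv ℝ u x‖ ^ 2) *
          Real.sqrt (∫ x, ‖e x‖ ^ 2) * Real.sqrt (∫ x, ‖fderiv ℝ e x‖ ^ 2) := by ring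
end
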